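/- arXiv:1507.08593 — 10 statements merged into one kernel-verified Lean document; each statement's English description precedes it below -/
import Mathlib

section
/- Let n ≥ 4 and let M be a subgroup of the symmetric group S_n on {1,…,n} which is an internal direct product M = ⟨ψ⟩ × ⟨τ⟩ (i.e. ψ and τ commute, ⟨ψ⟩ ∩ ⟨τ⟩ = 1 and M = ⟨ψ, τ⟩), where τ = (i j) is a transposition and ψ has order 2m for some positive integer m. Then there exists σ ∈ S_n of order 2m with σ(i) = i, σ(j) = j, σ commuting with τ, ⟨σ⟩ ∩ ⟨τ⟩ = 1, and M = ⟨σ⟩ × ⟨τ⟩. -/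
private lemma aux_dichotomy {n : ℕ} (ψ τ : Equiv.Perm (Fin n)) (i j : Fin n)
    (hij : i ≠ j) (hτ : τ = Equiv.swap i j) (hcomm : Commute ψ τ) :
    (ψ i = i ∧ ψ j = j) ∨ (ψ i = j ∧ ψ j = i) := by
  have h1 : ψ (τ i) = τ (ψ i) := by
    have := congrArg (fun g => g i) hcomm
    simpa [Equiv.Perm.mul_apply] using this
  have h2 : ψ (τ j) = τ (ψ j) := by
    have := congrArg (fun g => g j) hcomm
    simpa [Equiv.Perm.mul_apply] using this
  rw [hτ] at h1 h2
  simp [Equiv.swap_apply_left, Equiv.swap_apply_right] at h1 h2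
  by_cases hi : ψ i = i
  · left
    refine ⟨hi, ?_⟩
    rw [hi, Equiv.swap_apply_left] at h1
    exact h1
  by_cases hj : ψ i = j
  · right
    refine ⟨hj, ?_⟩
    rw [hj, Equiv.swap_apply_right] at h1
    exact h1
  · exfalso
    rw [Equiv.swap_apply_of_ne_of_ne hi hj] at h1
    exact hij (ψ.injective h1.symm)

/-- If `M ≤ Sₙ` (`n ≥ 4`) is the internal direct product of `⟨ψ⟩` of order `2m` and `⟨τ⟩`
with `τ = (i j)` a transposition, then the cyclic factor can be regenerated by some `σ` of
order `2m` fixing both `i` and `j`. -/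
theorem exists_generator_fixing_moved_points (n : ℕ) (hn : 4 ≤ n)
    (M : Subgroup (Equiv.Perm (Fin n))) (ψ τ : Equiv.Perm (Fin n)) (i j : Fin n)
    (hij : i ≠ j) (hτ : τ = Equiv.swap i j) (m : ℕ) (hm : 0 < m)
    (hord : orderOf ψ = 2 * m) (hcomm : Commute ψ τ)
    (hint : Subgroup.zpowers ψ ⊓ Subgroup.zpowers τ = ⊥)
    (hM : M = Subgroup.closure {ψ, τ}) :
    ∃ σ : Equiv.Perm (Fin n), orderOf σ = 2 * m ∧ σ i = i ∧ σ j = j ∧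
      Commute σ τ ∧ Subgroup.zpowers σ ⊓ Subgroup.zpowers τ = ⊥ ∧
      M = Subgroup.closure {σ, τ} := by
  have hτ2 : τ * τ = 1 := by rw [hτ]; exact Equiv.swap_mul_self i j
  rcases aux_dichotomy ψ τ i j hij hτ hcomm with ⟨hi, hj⟩ | ⟨hi, hj⟩
  · exact ⟨ψ, hord, hi, hj, hcomm, hint, hM⟩
  · refine ⟨ψ * τ, ?_, ?_, ?_, ?_, ?_, ?_⟩
    · -- order of ψ * τ is 2 * m
      have key : ∀ k : ℤ, (ψ * τ) ^ k = 1 → ψ ^ k = 1 ∧ τ ^ k = 1 := by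
        intro k hk
        rw [hcomm.mul_zpow] at hk
        have hψk : ψ ^ k ∈ Subgroup.zpowers ψ ⊓ Subgroup.zpowers τ := by
          constructor
          · exact Subgroup.zpow_mem_zpowers ψ k
          · have : ψ ^ k = (τ ^ k)⁻¹ := by
              rw [eq_inv_iff_mul_eq_one]; exact hk
            rw [this]
            exact Subgroup.inv_mem _ (Subgroup.zpow_mem_zpowers τ k)
        rw [hint, Subgroup.mem_bot] at hψk
        refine ⟨hψk, ?_⟩
        rw [hψk, one_mul] at hk
        exact hk
      have h2m : (ψ * τ) ^ (2 * m) = 1 := by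
        rw [hcomm.mul_pow]
        have h1 : ψ ^ (2 * m) = 1 := by rw [← hord]; exact pow_orderOf_eq_one ψ
        have h2 : τ ^ (2 * m) = 1 := by rw [pow_mul, pow_two, hτ2, one_pow]
        rw [h1, h2, one_mul]
      apply Nat.dvd_antisymm
      · exact orderOf_dvd_of_pow_eq_one h2m
      · have hk := key (orderOf (ψ * τ)) (by
          rw [zpow_natCast]; exact pow_orderOf_eq_one _)
        have hψ1 : ψ ^ (orderOf (ψ * τ)) = 1 := by
          have := hk.1; rwa [zpow_natCast] at this
        have := orderOf_dvd_of_pow_eq_one hψ1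
        rwa [hord] at this
    · rw [Equiv.Perm.mul_apply, hτ, Equiv.swap_apply_left, hj]
    · rw [Equiv.Perm.mul_apply, hτ, Equiv.swap_apply_right, hi]
    · exact (hcomm.mul_left (Commute.refl τ)).symm.symm
    · -- intersection trivial
      rw [eq_bot_iff]
      rintro x ⟨⟨a, ha⟩, ⟨b, hb⟩⟩
      dsimp only at ha hb
      simp only [Subgroup.mem_bot]
      rw [← ha]
      have hψa : ψ ^ a ∈ Subgroup.zpowers ψ ⊓ Subgroup.zpowers τ := by
        constructor
        · exact Subgroup.zpow_mem_zpowers ψ a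
        · have h3 : ψ ^ a = τ ^ b * (τ ^ a)⁻¹ := by
            rw [eq_mul_inv_iff_mul_eq, ← hcomm.mul_zpow, ha, ← hb]
          rw [h3]
          exact Subgroup.mul_mem _ (Subgroup.zpow_mem_zpowers τ b)
            (Subgroup.inv_mem _ (Subgroup.zpow_mem_zpowers τ a))
      rw [hint, Subgroup.mem_bot] at hψa
      have h2a : (2 : ℤ) ∣ a := by
        have hdvd : ((orderOf ψ : ℤ)) ∣ a := orderOf_dvd_iff_zpow_eq_one.mpr hψa
        rw [hord] at hdvd
        exact dvd_trans ⟨m, by push_cast; ring⟩ hdvd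
      obtain ⟨c, hc⟩ := h2a
      have hτa : τ ^ a = 1 := by
        rw [hc, zpow_mul, show (2:ℤ) = ((2:ℕ):ℤ) by norm_num, zpow_natCast,
          pow_two, hτ2, one_zpow]
      rw [hcomm.mul_zpow, hψa, hτa, one_mul]
    · rw [hM]
      apply le_antisymm
      · rw [Subgroup.closure_le]
        intro x hx
        have h1 : ψ * τ ∈ Subgroup.closure {ψ * τ, τ} :=
          Subgroup.subset_closure (by simp)
        have h2 : τ ∈ Subgroup.closure {ψ * τ, τ} :=
          Subgroup.subset_closure (by simp)
        have h3 : ψ ∈ Subgroup.closure {ψ * τ, τ} := by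
          have := Subgroup.mul_mem _ h1 h2
          rwa [mul_assoc, hτ2, mul_one] at this
        simp only [Set.mem_insert_iff, Set.mem_singleton_iff] at hx
        rcases hx with h | h
        · rw [h]; exact h3
        · rw [h]; exact h2
      · rw [Subgroup.closure_le]
        intro x hx
        have h1 : ψ ∈ Subgroup.closure {ψ, τ} := Subgroup.subset_closure (by simp)
        have h2 : τ ∈ Subgroup.closure {ψ, τ} := Subgroup.subset_closure (by simp)
        simp only [Set.mem_insert_iff, Set.mem_singleton_iff] at hx
        rcases hx with h | h
        · rw [h]; exact Subgroup.mul_mem _ h1 h2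
        · rw [h]; exact h2
end

section
/- Let n ≥ 4 and let M = ⟨σ⟩ × ⟨τ⟩ be a special metacyclic subgroup of S_n, where τ = (i j) is a transposition, σ(i) = i and σ(j) = j. Then every element of M maps the set {i, j} to itself; in particular M is contained in a conjugate of P_2, and consequently γ(S_n) ≤ γ'(S_n) ≤ γ(S_n) + 1. -/
open Equiv Pointwise

/-- A basic set for `G`: a finite set of proper subgroups whose conjugates cover `G`. -/
def IsBasicSet {G : Type*} [Group G] (δ : Finset (Subgroup G)) : Prop :=
  (∀ H ∈ δ, H ≠ ⊤) ∧ ∀ g : G, ∃ H ∈ δ, ∃ k : G, k * g * k⁻¹ ∈ H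

/-- The normal covering number `γ(G)`. -/
noncomputable def normalCoveringNumber (G : Type*) [Group G] : ℕ :=
  sInf {m | ∃ δ : Finset (Subgroup G), IsBasicSet δ ∧ δ.card = m}

/-- A special metacyclic subgroup of `Sₙ`. -/
def IsSpecialMetacyclic {n : ℕ} (M : Subgroup (Equiv.Perm (Fin n))) : Prop :=
  ∃ σ τ : Equiv.Perm (Fin n), τ.IsSwap ∧ Even (orderOf σ) ∧ Commute σ τ ∧
    Subgroup.zpowers σ ⊓ Subgroup.zpowers τ = ⊥ ∧ M = Subgroup.closure {σ, τ}

/-- A special basic set for `Sₙ`. -/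
def IsSpecialBasicSet {n : ℕ} (δ : Finset (Subgroup (Equiv.Perm (Fin n)))) : Prop :=
  IsBasicSet δ ∧ ∀ M : Subgroup (Equiv.Perm (Fin n)),
    (IsCyclic M ∨ IsSpecialMetacyclic M) →
      ∃ H ∈ δ, ∃ k : Equiv.Perm (Fin n), ∀ x ∈ M, k * x * k⁻¹ ∈ H

/-- The special normal covering number `γ'(Sₙ)`. -/
noncomputable def specialNormalCoveringNumber (n : ℕ) : ℕ :=
  sInf {m | ∃ δ : Finset (Subgroup (Equiv.Perm (Fin n))), IsSpecialBasicSet δ ∧ δ.card = m}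

/-- `P x`, the setwise stabilizer of `{0, …, x-1}` in `Sₙ`. -/
def Pstab (n x : ℕ) : Subgroup (Equiv.Perm (Fin n)) :=
  MulAction.stabilizer (Equiv.Perm (Fin n)) ({a : Fin n | (a : ℕ) < x} : Set (Fin n))

section helpers

set_option linter.unusedSectionVars false

variable {α : Type*} [DecidableEq α]

lemma perm_smul_set (ψ : Equiv.Perm α) (s : Set α) : ψ • s = ⇑ψ '' s := rfl

lemma commute_swap_image {σ : Equiv.Perm α} {i j : α} (hij : i ≠ j)
    (h : Commute σ (Equiv.swap i j)) : ⇑σ '' ({i, j} : Set α) = {i, j} := by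
  have hsw : Equiv.swap (σ i) (σ j) = Equiv.swap i j := by
    rw [Equiv.swap_apply_apply, h.eq, mul_inv_cancel_right]
  have hi : σ i = i ∨ σ i = j := by
    by_contra hc
    push_neg at hc
    have h1 : (Equiv.swap (σ i) (σ j)) (σ i) = σ j := Equiv.swap_apply_left _ _
    rw [hsw, Equiv.swap_apply_of_ne_of_ne hc.1 hc.2] at h1
    exact hij (σ.injective h1)
  have hj : σ j = i ∨ σ j = j := by
    by_contra hc
    push_neg at hc
    have h1 : (Equiv.swap (σ i) (σ j)) (σ j) = σ i := Equiv.swap_apply_right _ _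
    rw [hsw, Equiv.swap_apply_of_ne_of_ne hc.1 hc.2] at h1
    exact hij (σ.injective h1.symm)
  rw [Set.image_pair]
  rcases hi with hi | hi <;> rcases hj with hj | hj
  · exact absurd (σ.injective (hi.trans hj.symm)) hij
  · rw [hi, hj]
  · rw [hi, hj, Set.pair_comm]
  · exact absurd (σ.injective (hi.trans hj.symm)) hij

end helpers

lemma conj_into_Pstab (n : ℕ) (hn : 4 ≤ n) (M : Subgroup (Equiv.Perm (Fin n)))
    {σ τ : Equiv.Perm (Fin n)} {i j : Fin n} (hij : i ≠ j) (hτ : τ = Equiv.swap i j)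
    (hσT : ⇑σ '' ({i, j} : Set (Fin n)) = {i, j})
    (hM : M = Subgroup.closure {σ, τ}) :
    (∀ ψ ∈ M, (⇑ψ) '' ({i, j} : Set (Fin n)) = {i, j}) ∧
    (∃ k : Equiv.Perm (Fin n), ∀ x ∈ M, k * x * k⁻¹ ∈ Pstab n 2) := by
  set T : Set (Fin n) := {i, j} with hT
  have hτT : ⇑τ '' T = T := by
    rw [hτ, hT, Set.image_pair, Equiv.swap_apply_left, Equiv.swap_apply_right, Set.pair_comm]
  have hMstab : M ≤ MulAction.stabilizer (Equiv.Perm (Fin n)) T := by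
    rw [hM]
    apply Subgroup.closure_le _ |>.mpr
    intro g hg
    rcases hg with hg | hg <;> subst hg <;>
      simp only [SetLike.mem_coe, MulAction.mem_stabilizer_iff, perm_smul_set]
    · exact hσT
    · exact hτT
  have hstab : ∀ ψ ∈ M, (⇑ψ) '' T = T := by
    intro ψ hψ
    have := hMstab hψ
    rwa [MulAction.mem_stabilizer_iff, perm_smul_set] at this
  refine ⟨hstab, ?_⟩
  have h0 : (0 : ℕ) < n := by omega
  have h1 : (1 : ℕ) < n := by omega
  set i0 : Fin n := ⟨0, h0⟩
  set i1 : Fin n := ⟨1, h1⟩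
  have h01 : i0 ≠ i1 := by simp [i0, i1, Fin.ext_iff]
  set k1 : Equiv.Perm (Fin n) := Equiv.swap i i0
  set j' : Fin n := k1 j
  have hj'0 : j' ≠ i0 := by
    intro h
    have : j = i := by
      have := k1.injective (α := Fin n) (h.trans (Equiv.swap_apply_left i i0).symm : k1 j = k1 i)
      exact this
    exact hij this.symm
  set k : Equiv.Perm (Fin n) := Equiv.swap j' i1 * k1
  have hki : k i = i0 := by
    simp only [k, Equiv.Perm.mul_apply, k1, Equiv.swap_apply_left]
    exact Equiv.swap_apply_of_ne_of_ne hj'0.symm h01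
  have hkj : k j = i1 := by
    simp only [k, Equiv.Perm.mul_apply]
    exact Equiv.swap_apply_left _ _
  have hS : ({a : Fin n | (a : ℕ) < 2} : Set (Fin n)) = ⇑k '' T := by
    rw [hT, Set.image_pair, hki, hkj]
    ext a
    simp only [Set.mem_setOf_eq, Set.mem_insert_iff, Set.mem_singleton_iff, Fin.ext_iff, i0, i1]
    omega
  refine ⟨k, fun x hx => ?_⟩
  rw [Pstab, MulAction.mem_stabilizer_iff, perm_smul_set, hS]
  have hfun : ⇑(k * x * k⁻¹) = ⇑k ∘ ⇑x ∘ ⇑k⁻¹ := by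
    ext a; simp [Equiv.Perm.mul_apply]
  rw [hfun, Set.image_comp, Set.image_comp]
  have : ⇑k⁻¹ '' (⇑k '' T) = T := by
    rw [← Set.image_comp]
    simp
  rw [this, hstab x hx]

lemma perm_not_cyclic (n : ℕ) (hn : 4 ≤ n) (g : Equiv.Perm (Fin n)) :
    Subgroup.zpowers g ≠ ⊤ := by
  intro htop
  have h0 : (0:ℕ) < n := by omega
  have h1 : (1:ℕ) < n := by omega
  have h2 : (2:ℕ) < n := by omega
  set i0 : Fin n := ⟨0, h0⟩
  set i1 : Fin n := ⟨1, h1⟩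
  set i2 : Fin n := ⟨2, h2⟩
  set a : Equiv.Perm (Fin n) := Equiv.swap i0 i1
  set b : Equiv.Perm (Fin n) := Equiv.swap i0 i2
  have ha : a ∈ Subgroup.zpowers g := htop ▸ Subgroup.mem_top a
  have hb : b ∈ Subgroup.zpowers g := htop ▸ Subgroup.mem_top b
  obtain ⟨s, hs⟩ := Subgroup.mem_zpowers_iff.mp ha
  obtain ⟨t, ht⟩ := Subgroup.mem_zpowers_iff.mp hb
  have hcomm : Commute a b := by
    rw [← hs, ← ht]; exact (Commute.refl g).zpow_zpow s t
  have h01 : i1 ≠ i0 := by simp [i0, i1, Fin.ext_iff]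
  have h12 : i1 ≠ i2 := by simp [i1, i2, Fin.ext_iff]
  have hab : (a * b) i1 = i0 := by
    simp only [Equiv.Perm.mul_apply, a, b]
    rw [Equiv.swap_apply_of_ne_of_ne h01 h12, Equiv.swap_apply_right]
  have hba : (b * a) i1 = i2 := by
    simp only [Equiv.Perm.mul_apply, a, b]
    rw [Equiv.swap_apply_right, Equiv.swap_apply_left]
  rw [hcomm.eq, hba] at hab
  exact absurd hab (by simp [i0, i2, Fin.ext_iff])

lemma exists_basic (n : ℕ) (hn : 4 ≤ n) :
    ∃ δ : Finset (Subgroup (Equiv.Perm (Fin n))), IsBasicSet δ := by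
  classical
  refine ⟨Finset.univ.image (fun g : Equiv.Perm (Fin n) => Subgroup.zpowers g), ?_, ?_⟩
  · intro H hH
    obtain ⟨g, -, rfl⟩ := Finset.mem_image.mp hH
    exact perm_not_cyclic n hn g
  · intro g
    refine ⟨Subgroup.zpowers g, Finset.mem_image.mpr ⟨g, Finset.mem_univ g, rfl⟩, 1, ?_⟩
    simpa using Subgroup.mem_zpowers g

lemma Pstab_two_ne_top (n : ℕ) (hn : 4 ≤ n) : Pstab n 2 ≠ ⊤ := by
  intro htop
  have h0 : (0:ℕ) < n := by omega
  have h2 : (2:ℕ) < n := by omega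
  set i0 : Fin n := ⟨0, h0⟩
  set i2 : Fin n := ⟨2, h2⟩
  have hmem : Equiv.swap i0 i2 ∈ Pstab n 2 := htop ▸ Subgroup.mem_top _
  rw [Pstab, MulAction.mem_stabilizer_iff, perm_smul_set] at hmem
  have h0S : i0 ∈ ({a : Fin n | (a : ℕ) < 2} : Set (Fin n)) := by simp [i0]
  have : Equiv.swap i0 i2 i0 ∈ ({a : Fin n | (a : ℕ) < 2} : Set (Fin n)) :=
    hmem ▸ Set.mem_image_of_mem _ h0S
  rw [Equiv.swap_apply_left] at this
  simp [i2] at this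

lemma insert_special (n : ℕ) (hn : 4 ≤ n) (δ : Finset (Subgroup (Equiv.Perm (Fin n))))
    (hδ : IsBasicSet δ) :
    ∃ δ' : Finset (Subgroup (Equiv.Perm (Fin n))),
      IsSpecialBasicSet δ' ∧ δ'.card ≤ δ.card + 1 := by
  classical
  refine ⟨insert (Pstab n 2) δ, ⟨⟨?_, ?_⟩, ?_⟩, Finset.card_insert_le _ _⟩
  · intro H hH
    rcases Finset.mem_insert.mp hH with h | h
    · exact h ▸ Pstab_two_ne_top n hn
    · exact hδ.1 H h
  · intro g
    obtain ⟨H, hH, k, hk⟩ := hδ.2 g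
    exact ⟨H, Finset.mem_insert_of_mem hH, k, hk⟩
  · intro M hM
    rcases hM with hcyc | hmeta
    · obtain ⟨g, hg⟩ := hcyc.exists_generator
      obtain ⟨H, hH, k, hk⟩ := hδ.2 (g : Equiv.Perm (Fin n))
      refine ⟨H, Finset.mem_insert_of_mem hH, k, fun x hx => ?_⟩
      obtain ⟨m, hm⟩ := Subgroup.mem_zpowers_iff.mp (hg ⟨x, hx⟩)
      have hx' : x = (g : Equiv.Perm (Fin n)) ^ m := by
        have := congrArg (Subtype.val) hm
        simpa using this.symm
      rw [hx', ← conj_zpow]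
      exact Subgroup.zpow_mem H hk m
    · obtain ⟨σ, τ, hswap, -, hcomm, -, hMcl⟩ := hmeta
      obtain ⟨i, j, hij, hτ⟩ := hswap
      have hσT := commute_swap_image hij (hτ ▸ hcomm)
      obtain ⟨-, k, hk⟩ := conj_into_Pstab n hn M hij hτ hσT hMcl
      exact ⟨Pstab n 2, Finset.mem_insert_self _ _, k, hk⟩

/-- Every element of a special metacyclic subgroup `M = ⟨σ⟩ × ⟨τ⟩` of `Sₙ` stabilizes the
set `{i, j}` of letters moved by `τ`; in particular `M` lies in a conjugate of `P₂`, and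
consequently `γ(Sₙ) ≤ γ'(Sₙ) ≤ γ(Sₙ) + 1`. -/
theorem specialMetacyclic_le_conj_Pstab_two (n : ℕ) (hn : 4 ≤ n)
    (M : Subgroup (Equiv.Perm (Fin n))) (σ τ : Equiv.Perm (Fin n)) (i j : Fin n)
    (hij : i ≠ j) (hτ : τ = Equiv.swap i j) (hσi : σ i = i) (hσj : σ j = j)
    (heven : Even (orderOf σ)) (hcomm : Commute σ τ)
    (hint : Subgroup.zpowers σ ⊓ Subgroup.zpowers τ = ⊥)
    (hM : M = Subgroup.closure {σ, τ}) :
    (∀ ψ ∈ M, (⇑ψ) '' ({i, j} : Set (Fin n)) = {i, j}) ∧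
    (∃ k : Equiv.Perm (Fin n), ∀ x ∈ M, k * x * k⁻¹ ∈ Pstab n 2) ∧
    normalCoveringNumber (Equiv.Perm (Fin n)) ≤ specialNormalCoveringNumber n ∧
    specialNormalCoveringNumber n ≤ normalCoveringNumber (Equiv.Perm (Fin n)) + 1 := by
  have hσT : ⇑σ '' ({i, j} : Set (Fin n)) = {i, j} := by
    rw [Set.image_pair, hσi, hσj]
  obtain ⟨h1, h2⟩ := conj_into_Pstab n hn M hij hτ hσT hM
  refine ⟨h1, h2, ?_, ?_⟩
  · -- γ ≤ γ'
    have hne : {m | ∃ δ : Finset (Subgroup (Equiv.Perm (Fin n))),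
        IsSpecialBasicSet δ ∧ δ.card = m}.Nonempty := by
      obtain ⟨δ, hδ⟩ := exists_basic n hn
      obtain ⟨δ', hδ', -⟩ := insert_special n hn δ hδ
      exact ⟨δ'.card, δ', hδ', rfl⟩
    obtain ⟨δ, hδ, hcard⟩ := Nat.sInf_mem hne
    exact Nat.sInf_le ⟨δ, hδ.1, hcard⟩
  · -- γ' ≤ γ + 1
    have hne : {m | ∃ δ : Finset (Subgroup (Equiv.Perm (Fin n))),
        IsBasicSet δ ∧ δ.card = m}.Nonempty := by
      obtain ⟨δ, hδ⟩ := exists_basic n hn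
      exact ⟨δ.card, δ, hδ, rfl⟩
    obtain ⟨δ, hδ, hcard⟩ := Nat.sInf_mem hne
    obtain ⟨δ', hδ', hle⟩ := insert_special n hn δ hδ
    calc specialNormalCoveringNumber n ≤ δ'.card := Nat.sInf_le ⟨δ', hδ', rfl⟩
      _ ≤ δ.card + 1 := hle
      _ = normalCoveringNumber (Equiv.Perm (Fin n)) + 1 := by
          rw [hcard]; rfl
end

section
/- Let G be a finite group that is not cyclic. Then 2 ≤ γ(G) ≤ s(G) ≤ γ(G) + 1. -/
open MulAction in
/-- A finite group is not covered by the conjugates of a proper subgroup. -/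
lemma exists_forall_conj_not_mem {G : Type*} [Group G] [Finite G] {H : Subgroup G}
    (hH : H ≠ ⊤) : ∃ g : G, ∀ k : G, k * g * k⁻¹ ∉ H := by
  classical
  haveI : Fintype G := Fintype.ofFinite G
  by_contra hc
  push_neg at hc
  haveI : Fintype (G ⧸ H) := Fintype.ofFinite _
  haveI : Fintype (Quotient (orbitRel G (G ⧸ H))) := Fintype.ofFinite _
  have key := MulAction.sum_card_fixedBy_eq_card_orbits_mul_card_group G (G ⧸ H)
  -- the action is transitive, so there is exactly one orbit
  have hΩ : Fintype.card (Quotient (orbitRel G (G ⧸ H))) = 1 := by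
    rw [Fintype.card_eq_one_iff]
    refine ⟨Quotient.mk _ ((1 : G) : G ⧸ H), ?_⟩
    rintro ⟨b⟩
    refine Quotient.sound ?_
    obtain ⟨g, hg⟩ := MulAction.exists_smul_eq G ((1 : G) : G ⧸ H) b
    exact ⟨g, hg⟩
  -- each element fixes at least one point
  have h1 : ∀ g : G, 1 ≤ Fintype.card (MulAction.fixedBy (G ⧸ H) g) := by
    intro g
    obtain ⟨k, hk⟩ := hc g
    have : Nonempty (MulAction.fixedBy (G ⧸ H) g) := by
      refine ⟨⟨((k⁻¹ : G) : G ⧸ H), ?_⟩⟩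
      show g • ((k⁻¹ : G) : G ⧸ H) = ((k⁻¹ : G) : G ⧸ H)
      have : g • ((k⁻¹ : G) : G ⧸ H) = ((g * k⁻¹ : G) : G ⧸ H) := rfl
      rw [this, QuotientGroup.eq]
      have := H.inv_mem hk
      simpa [mul_assoc] using this
    exact Fintype.card_pos_iff.mpr this
  -- the identity fixes at least two points
  have h2 : 2 ≤ Fintype.card (MulAction.fixedBy (G ⧸ H) (1 : G)) := by
    have hinj : Function.Injective (fun b : G ⧸ H => (⟨b, one_smul _ b⟩ :
        MulAction.fixedBy (G ⧸ H) (1 : G))) := fun a b hab => by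
      simpa using congrArg Subtype.val hab
    calc 2 ≤ Fintype.card (G ⧸ H) := by
              have := Subgroup.one_lt_index_of_ne_top hH
              rwa [Subgroup.index, Nat.card_eq_fintype_card] at this
      _ ≤ _ := Fintype.card_le_of_injective _ hinj
  -- sum up
  have hsum : Fintype.card G + 1 ≤ ∑ g : G, Fintype.card (MulAction.fixedBy (G ⧸ H) g) := by
    rw [← Finset.sum_erase_add _ _ (Finset.mem_univ (1 : G))]
    have : (Finset.univ.erase (1 : G)).card ≤
        ∑ g ∈ Finset.univ.erase (1 : G), Fintype.card (MulAction.fixedBy (G ⧸ H) g) := by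
      have := Finset.card_nsmul_le_sum (Finset.univ.erase (1 : G)) _ 1 (fun g _ => h1 g)
      simpa only [smul_eq_mul, mul_one] using this
    have hcard : (Finset.univ.erase (1 : G)).card = Fintype.card G - 1 := by
      simp [Finset.card_erase_of_mem]
    omega
  rw [key, hΩ, one_mul] at hsum
  omega

/-- A basic set with the additional property that the intersection of all the conjugates
of all its members is trivial. -/
def IsTIBasicSet {G : Type*} [Group G] (δ : Finset (Subgroup G)) : Prop :=
  IsBasicSet δ ∧ ∀ x : G, (∀ H ∈ δ, ∀ k : G, k * x * k⁻¹ ∈ H) → x = 1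

/-- The parameter `s(G)`. -/
noncomputable def sNumber (G : Type*) [Group G] : ℕ :=
  sInf {m | ∃ δ : Finset (Subgroup G), IsTIBasicSet δ ∧ δ.card = m}

/-- For a finite noncyclic group `G` one has `2 ≤ γ(G) ≤ s(G) ≤ γ(G) + 1`. -/
theorem gamma_le_sNumber_le_gamma_add_one (G : Type*) [Group G] [Finite G]
    (hG : ¬ IsCyclic G) :
    2 ≤ normalCoveringNumber G ∧ normalCoveringNumber G ≤ sNumber G ∧
      sNumber G ≤ normalCoveringNumber G + 1 := by
  classical
  haveI : Fintype G := Fintype.ofFinite G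
  haveI : Nontrivial G := by
    by_contra h
    rw [not_nontrivial_iff_subsingleton] at h
    exact hG isCyclic_of_subsingleton
  have hbot : (⊥ : Subgroup G) ≠ ⊤ := bot_ne_top
  -- a basic set exists
  have hδ0 : IsBasicSet (Finset.univ.image (fun g : G => Subgroup.zpowers g)) := by
    constructor
    · intro H hH
      simp only [Finset.mem_image, Finset.mem_univ, true_and] at hH
      obtain ⟨g, rfl⟩ := hH
      intro htop
      exact hG ⟨⟨g, fun x => by rw [← Subgroup.mem_zpowers_iff, htop]; exact Subgroup.mem_top x⟩⟩
    · intro g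
      exact ⟨Subgroup.zpowers g, Finset.mem_image.mpr ⟨g, Finset.mem_univ g, rfl⟩,
        1, by simp [Subgroup.mem_zpowers g]⟩
  -- adding ⊥ to a basic set yields a TI basic set
  have hins : ∀ δ : Finset (Subgroup G), IsBasicSet δ → IsTIBasicSet (insert ⊥ δ) := by
    intro δ ⟨hp, hcov⟩
    refine ⟨⟨?_, ?_⟩, ?_⟩
    · intro H hH
      rcases Finset.mem_insert.mp hH with rfl | hH
      · exact hbot
      · exact hp H hH
    · intro g
      obtain ⟨H, hH, k, hk⟩ := hcov g
      exact ⟨H, Finset.mem_insert_of_mem hH, k, hk⟩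
    · intro x hx
      have := hx ⊥ (Finset.mem_insert_self _ _) 1
      simpa using this
  have hSγ : {m | ∃ δ : Finset (Subgroup G), IsBasicSet δ ∧ δ.card = m}.Nonempty :=
    ⟨_, _, hδ0, rfl⟩
  have hSs : {m | ∃ δ : Finset (Subgroup G), IsTIBasicSet δ ∧ δ.card = m}.Nonempty :=
    ⟨_, _, hins _ hδ0, rfl⟩
  refine ⟨?_, ?_, ?_⟩
  · -- 2 ≤ γ
    obtain ⟨δ, hδ, hcard⟩ := Nat.sInf_mem hSγ
    rw [normalCoveringNumber, ← hcard]
    rcases hδ with ⟨hp, hcov⟩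
    rw [Nat.two_le_iff]
    constructor
    · intro h0
      rw [Finset.card_eq_zero] at h0
      obtain ⟨H, hH, -⟩ := hcov 1
      simp [h0] at hH
    · intro h1
      rw [Finset.card_eq_one] at h1
      obtain ⟨H, rfl⟩ := h1
      obtain ⟨g, hg⟩ := exists_forall_conj_not_mem (hp H (Finset.mem_singleton_self H))
      obtain ⟨H', hH', k, hk⟩ := hcov g
      rw [Finset.mem_singleton] at hH'
      exact hg k (hH' ▸ hk)
  · -- γ ≤ s
    exact csInf_le_csInf (OrderBot.bddBelow _) hSs (fun m ⟨δ, hδ, hc⟩ => ⟨δ, hδ.1, hc⟩)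
  · -- s ≤ γ + 1
    obtain ⟨δ, hδ, hcard⟩ := Nat.sInf_mem hSγ
    calc sNumber G ≤ (insert ⊥ δ).card := Nat.sInf_le ⟨_, hins δ hδ, rfl⟩
      _ ≤ δ.card + 1 := Finset.card_insert_le _ _
      _ = normalCoveringNumber G + 1 := by rw [hcard]; rfl
end

section
/- Let n ≥ 5 be odd. Then every basic set for S_n of minimal cardinality γ(S_n) all of whose members are maximal subgroups of S_n contains a conjugate of P_2. -/
open Equiv Pointwise

/-!
Write `n = 2 + m` with `m` odd and let `τ = (a b) c`, where `c` is an `m`-cycle on the other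
points. Some conjugate of `τ` lies in a maximal member `H` of `δ`; as `m` is odd, `τ ^ m = (a b)`,
so `(a b) ∈ H` and `c ∈ H`. No transposition `(a x)` with `x ∉ {a, b}` lies in `H`: conjugating it
by powers of `c` would put every transposition through `a` into `H`. If some `h ∈ H` moved `a` to
`u ∉ {a, b}`, then `(u, h b) ∈ H` with `h b` also outside `{a, b}`, and conjugating by the power of
`c` sending `h b` to `u` gives `(c' u, u) ∈ H` with `c' u ≠ h b`, because a group of odd order
contains no element swapping two points; pulling back by `h⁻¹` gives a forbidden transposition
through `a`. Hence `H` is contained in, and by maximality equal to, the stabilizer of `{a, b}`.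
-/

open MulAction

section
variable {α : Type*} [DecidableEq α] {H : Subgroup (Perm α)}

theorem Subgroup.swap_apply_apply_mem {h : Perm α} {x y : α} (hh : h ∈ H) (hxy : swap x y ∈ H) :
    swap (h x) (h y) ∈ H := by
  rw [swap_apply_apply]
  exact H.mul_mem (H.mul_mem hh hxy) (H.inv_mem hh)

theorem Subgroup.eq_top_of_forall_swap_mem [Finite α] (a : α) (h : ∀ x, swap a x ∈ H) : H = ⊤ := by
  refine eq_top_iff.2 fun f _ ↦ Perm.swap_induction_on f H.one_mem fun f x y _ hf ↦ H.mul_mem ?_ hf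
  -- `swap x y` is the conjugate of `swap a (swap a x y)` by `swap a x`
  simpa using H.swap_apply_apply_mem (h x) (h (swap a x y))

end

theorem Subgroup.mem_and_mem_of_mul_mem {G : Type*} [Group G] {H : Subgroup G} {t c : G} {m : ℕ}
    (htc : Commute t c) (ht : t ^ 2 = 1) (hc : c ^ m = 1) (hm : Odd m) (h : t * c ∈ H) :
    t ∈ H ∧ c ∈ H := by
  obtain ⟨r, rfl⟩ := hm
  have htH : t ∈ H := by
    have := H.pow_mem h (2 * r + 1)
    rwa [htc.mul_pow, hc, mul_one, pow_succ, pow_mul, ht, one_pow, one_mul] at this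
  exact ⟨htH, by simpa using H.mul_mem (H.inv_mem htH) h⟩

section
variable {α : Type*} [DecidableEq α] [Finite α] {H K : Subgroup (Perm α)} {a b : α}

theorem swap_notMem_of_isTransitive_off_pair (hH : H ≠ ⊤) (hswap : swap a b ∈ H) (hKH : K ≤ H)
    (hKa : ∀ g ∈ K, g a = a)
    (hKtrans : ∀ x y, x ≠ a → x ≠ b → y ≠ a → y ≠ b → ∃ g ∈ K, g x = y)
    {x : α} (hxa : x ≠ a) (hxb : x ≠ b) : swap a x ∉ H := by
  intro hax
  refine hH (H.eq_top_of_forall_swap_mem a fun y ↦ ?_)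
  by_cases hya : y = a
  · rw [hya, swap_self]
    exact H.one_mem
  by_cases hyb : y = b
  · rwa [hyb]
  obtain ⟨g, hgK, hgxy⟩ := hKtrans x y hxa hxb hya hyb
  simpa [hKa g hgK, hgxy] using H.swap_apply_apply_mem (hKH hgK) hax

theorem apply_eq_or_apply_eq_of_mem (hH : H ≠ ⊤) (hab : a ≠ b) (hswap : swap a b ∈ H)
    (hKH : K ≤ H) (hKa : ∀ g ∈ K, g a = a)
    (hKtrans : ∀ x y, x ≠ a → x ≠ b → y ≠ a → y ≠ b → ∃ g ∈ K, g x = y)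
    (hKsq : ∀ g ∈ K, ∀ x, g (g x) = x → g x = x)
    {h : Perm α} (hh : h ∈ H) : h a = a ∨ h a = b := by
  have notMem {x : α} := swap_notMem_of_isTransitive_off_pair hH hswap hKH hKa hKtrans (x := x)
  by_contra! ⟨hua, hub⟩
  set u := h a
  set v := h b
  have huv : swap u v ∈ H := H.swap_apply_apply_mem hh hswap
  have hvu : v ≠ u := h.injective.ne hab.symm
  by_cases hva : v = a
  · exact notMem hua hub (by rwa [hva, swap_comm] at huv)
  by_cases hvb : v = b
  · refine notMem hua hub ?_
    simpa [hvb, swap_apply_of_ne_of_ne hua hub, swap_comm] using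
      H.swap_apply_apply_mem hswap huv
  obtain ⟨g, hgK, hgvu⟩ := hKtrans v u hva hvb hua hub
  -- `g` maps `swap u v` to `swap (g u) u`, and `g u ∉ {u, v}`; conjugating by `h⁻¹` gives a
  -- transposition through `a` and a third point.
  have hgu_ne_u : g u ≠ u := fun h' ↦ hvu (g.injective (h'.trans hgvu.symm)).symm
  have hgu_ne_v : g u ≠ v := fun h' ↦ hvu ((hKsq g hgK v (by rw [hgvu, h'])).symm.trans hgvu)
  have hgu : swap (g u) u ∈ H := by simpa [hgvu] using H.swap_apply_apply_mem (hKH hgK) huv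
  have key := H.swap_apply_apply_mem (H.inv_mem hh) hgu
  rw [show h⁻¹ u = a from h.symm_apply_apply a, swap_comm] at key
  refine notMem (fun h' ↦ hgu_ne_u ?_) (fun h' ↦ hgu_ne_v ?_) key
  · simpa [u] using congrArg h h'
  · simpa [v] using congrArg h h'

theorem le_stabilizer_pair (hH : H ≠ ⊤) (hab : a ≠ b) (hswap : swap a b ∈ H)
    (hKH : K ≤ H) (hKa : ∀ g ∈ K, g a = a)
    (hKtrans : ∀ x y, x ≠ a → x ≠ b → y ≠ a → y ≠ b → ∃ g ∈ K, g x = y)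
    (hKsq : ∀ g ∈ K, ∀ x, g (g x) = x → g x = x) :
    H ≤ stabilizer (Perm α) ({a, b} : Set α) := by
  intro h hh
  have hmaps {h : Perm α} (hh : h ∈ H) :=
    apply_eq_or_apply_eq_of_mem hH hab hswap hKH hKa hKtrans hKsq hh
  have hha := hmaps hh
  have hhb : h b = a ∨ h b = b := by
    simpa using hmaps (H.mul_mem hh hswap)
  have hne : h a ≠ h b := h.injective.ne hab
  rw [mem_stabilizer_iff, Set.smul_set_insert, Set.smul_set_singleton, Perm.smul_def,
    Perm.smul_def]
  rcases hha with hha | hha <;> rcases hhb with hhb | hhb <;> simp_all [Set.pair_comm]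

theorem eq_stabilizer_pair_of_isCoatom (hH : IsCoatom H) (hab : a ≠ b) (hswap : swap a b ∈ H)
    (hKH : K ≤ H) (hKa : ∀ g ∈ K, g a = a)
    (hKtrans : ∀ x y, x ≠ a → x ≠ b → y ≠ a → y ≠ b → ∃ g ∈ K, g x = y)
    (hKsq : ∀ g ∈ K, ∀ x, g (g x) = x → g x = x) :
    H = stabilizer (Perm α) ({a, b} : Set α) := by
  refine ((hH.le_iff.mp (le_stabilizer_pair hH.1 hab hswap hKH hKa hKtrans hKsq)).resolve_left
    fun htop ↦ hH.1 (H.eq_top_of_forall_swap_mem a fun y ↦ ?_)).symm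
  -- if every permutation fixes `{a, b}`, there is no third point
  have hy : y ∈ ({a, b} : Set α) := by
    have := Set.smul_mem_smul_set (a := swap a y) (Set.mem_insert a {b})
    rwa [(mem_stabilizer_iff.mp (htop ▸ Subgroup.mem_top (swap a y))), Perm.smul_def,
      swap_apply_left] at this
  rcases hy with rfl | rfl
  · rw [swap_self]
    exact H.one_mem
  · exact hswap

end

def shift (m : ℕ) : Multiplicative (ZMod m) →* Perm (Fin 2 ⊕ ZMod m) where
  toFun j := Perm.sumCongr 1 (Equiv.addRight j.toAdd)
  map_one' := by ext (x | x) <;> simp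
  map_mul' j k := by ext (x | x) <;> simp [add_comm]

section shift
variable {m : ℕ}

@[simp]
theorem shift_apply_inl (j : Multiplicative (ZMod m)) (i : Fin 2) :
    shift m j (Sum.inl i) = Sum.inl i := rfl

@[simp]
theorem shift_apply_inr (j : Multiplicative (ZMod m)) (z : ZMod m) :
    shift m j (Sum.inr z) = Sum.inr (z + j.toAdd) := rfl

theorem shift_eq_pow [NeZero m] (j : Multiplicative (ZMod m)) :
    shift m j = shift m (.ofAdd 1) ^ j.toAdd.val := by
  rw [← map_pow, ← ofAdd_nsmul, nsmul_one, ZMod.natCast_zmod_val, ofAdd_toAdd]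

theorem shift_ofAdd_one_pow_self : shift m (.ofAdd 1) ^ m = 1 := by
  rw [← map_pow, ← ofAdd_nsmul, nsmul_one, ZMod.natCast_self, ofAdd_zero, map_one]

theorem shift_apply_eq_self_of_apply_apply (hm : Odd m) {j : Multiplicative (ZMod m)}
    {x : Fin 2 ⊕ ZMod m} (h : shift m j (shift m j x) = x) : shift m j x = x := by
  rcases x with i | z
  · rfl
  have h2 : IsUnit (2 : ZMod m) := by
    exact_mod_cast (ZMod.isUnit_iff_coprime 2 m).mpr (Nat.coprime_two_left.mpr hm)
  have hj : 2 * j.toAdd = 0 := by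
    simpa [add_assoc, ← two_mul] using h
  simp [h2.mul_right_eq_zero.mp hj]

end shift

theorem exists_eq_inr_of_ne_inl {β : Type*} {x : Fin 2 ⊕ β} (h0 : x ≠ .inl 0) (h1 : x ≠ .inl 1) :
    ∃ z, x = .inr z := by
  rcases x with i | z
  · fin_cases i <;> simp_all
  · exact ⟨z, rfl⟩

theorem eq_stabilizer_of_permCongr_mem {α : Type*} [DecidableEq α] [Finite α] {m : ℕ}
    (hm : Odd m) {H : Subgroup (Perm α)} (hH : IsCoatom H) (e : Fin 2 ⊕ ZMod m ≃ α)
    (hτ : e.permCongr (swap (.inl 0) (.inl 1) * shift m (.ofAdd 1)) ∈ H) :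
    H = stabilizer (Perm α) ({e (.inl 0), e (.inl 1)} : Set α) := by
  have : NeZero m := ⟨hm.pos.ne'⟩
  let f : Perm (Fin 2 ⊕ ZMod m) →* Perm α := e.permCongrHom
  have hf {g x} : f g (e x) = e (g x) := by simp [f]
  have hcomm : Commute (swap (.inl 0) (.inl 1)) (shift m (.ofAdd 1)) :=
    Perm.Disjoint.commute fun
      | .inl _ => .inr rfl
      | .inr _ => .inl (swap_apply_of_ne_of_ne (by simp) (by simp))
  obtain ⟨hswap, hc⟩ := Subgroup.mem_and_mem_of_mul_mem (H := H.comap f) hcomm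
    (by rw [sq, swap_mul_self]) shift_ofAdd_one_pow_self hm hτ
  have hcompl {x} (h0 : x ≠ e (.inl 0)) (h1 : x ≠ e (.inl 1)) : ∃ z, x = e (.inr z) := by
    obtain ⟨z, hz⟩ := exists_eq_inr_of_ne_inl (x := e.symm x) (by rwa [Ne, e.symm_apply_eq])
      (by rwa [Ne, e.symm_apply_eq])
    exact ⟨z, e.symm_apply_eq.mp hz⟩
  refine eq_stabilizer_pair_of_isCoatom (K := (f.comp (shift m)).range) hH
    (e.injective.ne (by simp)) ((symm_trans_swap_trans _ _ e).symm ▸ hswap) ?_ ?_ ?_ ?_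
  · rintro _ ⟨j, rfl⟩
    rw [MonoidHom.comp_apply, shift_eq_pow, map_pow]
    exact H.pow_mem hc _
  · rintro _ ⟨j, rfl⟩
    simp [hf]
  · intro x y hx0 hx1 hy0 hy1
    obtain ⟨z, rfl⟩ := hcompl hx0 hx1
    obtain ⟨w, rfl⟩ := hcompl hy0 hy1
    exact ⟨_, ⟨.ofAdd (w - z), rfl⟩, by
      rw [MonoidHom.comp_apply, hf, shift_apply_inr, toAdd_ofAdd, add_sub_cancel]⟩
  · rintro _ ⟨j, rfl⟩ x hx
    obtain ⟨x, rfl⟩ := e.surjective x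
    simp only [MonoidHom.comp_apply, hf] at hx ⊢
    exact congrArg e (shift_apply_eq_self_of_apply_apply hm (e.injective hx))

theorem minimal_basicSet_contains_Pstab_two_general (n : ℕ) (hn : 5 ≤ n) (hodd : Odd n)
    (δ : Finset (Subgroup (Equiv.Perm (Fin n)))) (hδ : IsBasicSet δ)
    (hmax : ∀ H ∈ δ, IsCoatom H) :
    ∃ H ∈ δ, ∃ k : Equiv.Perm (Fin n),
      H = Subgroup.map (MulAut.conj k).toMonoidHom (Pstab n 2) := by
  obtain ⟨m, rfl⟩ := Nat.exists_eq_add_of_le (show 2 ≤ n by omega)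
  have hm : Odd m := (Nat.odd_add'.mp hodd).mpr even_two
  have : NeZero m := ⟨hm.pos.ne'⟩
  let φ : Fin 2 ⊕ ZMod m ≃ Fin (2 + m) :=
    (Equiv.sumCongr (Equiv.refl _) (ZMod.finEquiv m).symm.toEquiv).trans finSumFinEquiv
  let τ : Perm (Fin 2 ⊕ ZMod m) := swap (.inl 0) (.inl 1) * shift m (.ofAdd 1)
  obtain ⟨H, hH, k, hk⟩ := hδ.2 (φ.permCongr τ)
  have hconj : k * φ.permCongr τ * k⁻¹ = (φ.trans k).permCongr τ := by ext; simp
  have hpair : {a : Fin (2 + m) | (a : ℕ) < 2} = {φ (.inl 0), φ (.inl 1)} := by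
    ext a
    simp only [φ, Equiv.trans_apply, Equiv.sumCongr_apply, Sum.map_inl, Equiv.refl_apply,
      finSumFinEquiv_apply_left, Set.mem_ofPred_eq, Set.mem_insert_iff, Set.mem_singleton_iff,
      Fin.ext_iff, Fin.val_castAdd]
    omega
  refine ⟨H, hH, k, ?_⟩
  rw [eq_stabilizer_of_permCongr_mem hm (hmax H hH) (φ.trans k) (hconj ▸ hk), Pstab,
    ← stabilizer_smul_eq_stabilizer_map_conj, hpair, Set.smul_set_insert, Set.smul_set_singleton]
  rfl

/-- For odd `n ≥ 5`, every minimal basic set of `Sₙ` consisting of maximal subgroups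
contains a conjugate of `P₂`. -/
theorem minimal_basicSet_contains_Pstab_two (n : ℕ) (hn : 5 ≤ n) (hodd : Odd n)
    (δ : Finset (Subgroup (Equiv.Perm (Fin n)))) (hδ : IsBasicSet δ)
    (hcard : δ.card = normalCoveringNumber (Equiv.Perm (Fin n)))
    (hmax : ∀ H ∈ δ, IsCoatom H) :
    ∃ H ∈ δ, ∃ k : Equiv.Perm (Fin n),
      H = Subgroup.map (MulAut.conj k).toMonoidHom (Pstab n 2) :=
  minimal_basicSet_contains_Pstab_two_general n hn hodd δ hδ hmax
end

section
/- Let n = bm with b, m ≥ 2 integers, and let σ_1, …, σ_l ∈ S_n be cycles (permutations with exactly one orbit of size greater than 1) with pairwise disjoint supports, such that b divides the length of each σ_i. Then there exists a partition of {1,…,n} into m blocks, each of size b, such that every σ_i maps each block onto a block; equivalently, the subgroup ⟨σ_1,…,σ_l⟩ is contained in a conjugate of the wreath product S_b ≀ S_m. -/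
/-!
For a cycle `σᵢ` of length `b tᵢ`, the power `σᵢ ^ tᵢ` splits the support of `σᵢ` into `tᵢ`
cycles of length `b`, and it commutes with every `σⱼ`. Multiplying these powers and covering the
common fixed points (there are a multiple of `b` of them) by further `b`-cycles gives a
fixed-point-free permutation `τ` all of whose cycles have length `b` and which commutes with every
`σᵢ`. Anything commuting with `τ` permutes the cycles of `τ`, so relabelling the cycles of `τ` as
the consecutive blocks conjugates the whole group `⟨σ₁, …, σₗ⟩` into `S_b ≀ S_m`.
-/

/-- The stabilizer `S_b ≀ S_{n/b}` in `Sₙ` of the partition of `{0,…,n-1}` into consecutive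
blocks of size `b`. -/
def blockStab (n b : ℕ) : Subgroup (Equiv.Perm (Fin n)) where
  carrier := {ψ | ∀ a c : Fin n, (ψ a : ℕ) / b = (ψ c : ℕ) / b ↔ (a : ℕ) / b = (c : ℕ) / b}
  one_mem' := by intro a c; simp
  mul_mem' := by
    intro ψ φ hψ hφ a c
    simp only [Equiv.Perm.mul_apply]
    exact (hψ _ _).trans (hφ _ _)
  inv_mem' := by
    intro ψ hψ a c
    simpa using (hψ (ψ⁻¹ a) (ψ⁻¹ c)).symm

open Equiv Finset

def kerStab {α β : Type*} (f : α → β) : Subgroup (Perm α) where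
  carrier := {ψ | ∀ x y, f (ψ x) = f (ψ y) ↔ f x = f y}
  one_mem' := by simp
  mul_mem' hψ hφ x y := (hψ _ _).trans (hφ _ _)
  inv_mem' {ψ} hψ x y := by simpa using (hψ (ψ⁻¹ x) (ψ⁻¹ y)).symm

theorem blockStab_eq_kerStab (n b : ℕ) : blockStab n b = kerStab fun x : Fin n ↦ (x : ℕ) / b :=
  rfl

theorem conj_mem_kerStab {α β γ : Type*} {f : α → β} {f' : α → γ} {k ψ : Perm α}
    (hk : ∀ x y, f' (k x) = f' (k y) ↔ f x = f y) (hψ : ψ ∈ kerStab f) :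
    k * ψ * k⁻¹ ∈ kerStab f' := by
  intro x y
  simp only [Perm.mul_apply]
  rw [hk, hψ, ← hk]
  simp

theorem Equiv.exists_equiv_prod_fin_of_card_fiber {α β : Type*} [Finite α] (f : α → β) {b : ℕ}
    (hf : ∀ y, Nat.card {x // f x = y} = b) : ∃ e : α ≃ β × Fin b, ∀ x, (e x).1 = f x :=
  ⟨(sigmaFiberEquiv f).symm.trans <|
      (sigmaCongrRight fun y ↦ Finite.equivFinOfCardEq (hf y)).trans (sigmaEquivProd β (Fin b)),
    fun _ ↦ rfl⟩

namespace Equiv.Perm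

theorem mem_kerStab_mk_sameCycle_of_commute {α : Type*} {τ ψ : Perm α} (h : Commute ψ τ) :
    ψ ∈ kerStab (Quotient.mk (SameCycle.setoid τ)) := by
  intro x y
  simp only [Quotient.eq]
  change τ.SameCycle (ψ x) (ψ y) ↔ τ.SameCycle x y
  calc τ.SameCycle (ψ x) (ψ y) ↔ (ψ * τ * ψ⁻¹).SameCycle (ψ x) (ψ y) := by rw [h.mul_inv_cancel]
    _ ↔ τ.SameCycle x y := by simp [sameCycle_conj]

variable {α : Type*} [Fintype α] [DecidableEq α]

theorem card_sameCycle_mem_cycleType {τ : Perm α} {x : α} (hx : x ∈ τ.support) :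
    Nat.card {y // τ.SameCycle y x} ∈ τ.cycleType := by
  have hcard : Nat.card {y // τ.SameCycle y x} = #(τ.cycleOf x).support := by
    rw [Nat.card_eq_fintype_card, Fintype.card_subtype]
    congr 1
    ext y
    rw [mem_support_cycleOf_iff]
    simp [hx, sameCycle_comm]
  rw [hcard, cycleType_def]
  exact Multiset.mem_map_of_mem _ (cycleOf_mem_cycleFactorsFinset_iff.2 hx)

theorem IsCycle.eq_orderOf_of_mem_cycleType_pow {σ : Perm α} (hσ : σ.IsCycle) {t k : ℕ}
    (hk : k ∈ (σ ^ t).cycleType) : k = orderOf (σ ^ t) := by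
  rw [cycleType_def] at hk
  obtain ⟨c, hc, rfl⟩ := Multiset.mem_map.1 hk
  have hc' := mem_cycleFactorsFinset_iff.1 hc
  obtain ⟨x, hx⟩ := hc'.1.nonempty_support
  have hσx : σ x ≠ x :=
    mem_support.1 (support_pow_le σ t (mem_cycleFactorsFinset_support_le hc hx))
  rw [Function.comp_apply, ← hc'.1.orderOf, orderOf_eq_orderOf_iff]
  intro j
  rw [hc'.1.pow_eq_one_iff' (mem_support.1 hx), cycle_is_cycleOf hx hc, cycleOf_pow_apply_self,
    ← pow_mul, ← hσ.pow_eq_one_iff' hσx, pow_mul]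

theorem IsCycle.orderOf_pow_card_support_div {σ : Perm α} (hσ : σ.IsCycle) {b : ℕ}
    (hb : b ∣ #σ.support) : orderOf (σ ^ (#σ.support / b)) = b := by
  have hL : 0 < #σ.support := by have := hσ.two_le_card_support; omega
  rw [orderOf_pow_of_dvd, hσ.orderOf, Nat.div_div_self hb hL.ne']
  · exact (Nat.div_pos (Nat.le_of_dvd hL hb) (Nat.pos_of_dvd_of_pos hb hL)).ne'
  · rw [hσ.orderOf]
    exact Nat.div_dvd_of_dvd hb

theorem IsCycle.support_pow_card_support_div {σ : Perm α} (hσ : σ.IsCycle) {b : ℕ}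
    (hb : b ∣ #σ.support) (hb1 : 1 < b) : (σ ^ (#σ.support / b)).support = σ.support := by
  have hL : 0 < #σ.support := by have := hσ.two_le_card_support; omega
  refine hσ.support_pow_of_pos_of_lt_orderOf (Nat.div_pos (Nat.le_of_dvd hL hb) (by omega)) ?_
  rw [hσ.orderOf]
  exact Nat.div_lt_self hL hb1

theorem exists_disjoint_mul_support_eq_univ (ρ : Perm α) {b : ℕ} (hb : 2 ≤ b)
    (hα : b ∣ Fintype.card α) (hρ : ∀ k ∈ ρ.cycleType, k = b) :
    ∃ g : Perm α, Disjoint ρ g ∧ (ρ * g).support = univ ∧ ∀ k ∈ (ρ * g).cycleType, k = b := by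
  have hc : b ∣ Fintype.card {x // x ∉ ρ.support} := by
    have hsupp : b ∣ #ρ.support := by
      rw [← sum_cycleType, Multiset.eq_replicate_of_mem hρ, Multiset.sum_replicate, smul_eq_mul]
      exact dvd_mul_left b _
    rw [Fintype.card_subtype_compl, Fintype.card_coe]
    exact Nat.dvd_sub hα hsupp
  set c := Fintype.card {x // x ∉ ρ.support}
  obtain ⟨g, hg⟩ := (exists_with_cycleType_iff {x // x ∉ ρ.support}
    (m := Multiset.replicate (c / b) b)).2
      ⟨by rw [Multiset.sum_replicate, smul_eq_mul, Nat.div_mul_cancel hc],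
        fun a ha ↦ Multiset.eq_of_mem_replicate ha ▸ hb⟩
  have hg_supp : g.support = univ := by
    refine eq_univ_of_card _ ?_
    rw [← sum_cycleType, hg, Multiset.sum_replicate, smul_eq_mul, Nat.div_mul_cancel hc]
  have hdisj : Disjoint ρ (ofSubtype g) := by
    intro x
    by_cases hx : x ∈ ρ.support
    · exact .inr (ofSubtype_apply_of_not_mem g (not_not.2 hx))
    · exact .inl (notMem_support.1 hx)
  refine ⟨ofSubtype g, hdisj, ?_, ?_⟩
  · rw [hdisj.support_mul, support_ofSubtype, hg_supp, eq_univ_iff_forall]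
    intro x
    by_cases hx : x ∈ ρ.support
    · exact mem_union_left _ hx
    · exact mem_union_right _ (mem_map_of_mem _ (mem_univ (⟨x, hx⟩ : {x // x ∉ ρ.support})))
  · rw [hdisj.cycleType_mul, cycleType_ofSubtype, hg]
    intro k hk
    rcases Multiset.mem_add.1 hk with hk | hk
    exacts [hρ k hk, Multiset.eq_of_mem_replicate hk]

theorem exists_commute_of_pairwise_disjoint_isCycle {ι : Type*} [Fintype ι] {σ : ι → Perm α}
    (hcyc : ∀ i, (σ i).IsCycle) (hdisj : Pairwise fun i j ↦ Disjoint (σ i) (σ j)) {b : ℕ}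
    (hb : 2 ≤ b) (hdvd : ∀ i, b ∣ #(σ i).support) (hα : b ∣ Fintype.card α) :
    ∃ τ : Perm α, τ.support = univ ∧ (∀ k ∈ τ.cycleType, k = b) ∧ ∀ i, Commute (σ i) τ := by
  set t := fun i ↦ #(σ i).support / b
  have hpow : Set.Pairwise (univ : Finset ι) fun i j ↦ Disjoint (σ i ^ t i) (σ j ^ t j) :=
    fun i _ j _ hij ↦ (hdisj hij).pow_disjoint_pow _ _
  set ρ := univ.noncommProd (fun i ↦ σ i ^ t i) (hpow.imp fun _ _ ↦ Disjoint.commute)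
  have hρ : ∀ k ∈ ρ.cycleType, k = b := by
    rw [Disjoint.cycleType_noncommProd hpow]
    intro k hk
    obtain ⟨i, -, hi⟩ := Multiset.mem_sum.1 hk
    rw [(hcyc i).eq_orderOf_of_mem_cycleType_pow hi, (hcyc i).orderOf_pow_card_support_div (hdvd i)]
  have hsupp : ∀ i, (σ i).support ⊆ ρ.support := by
    intro i
    rw [support_noncommProd hpow, ← (hcyc i).support_pow_card_support_div (hdvd i) hb]
    exact subset_biUnion_of_mem (fun j ↦ (σ j ^ t j).support) (mem_univ i)
  obtain ⟨g, hρg, hτ_supp, hτ⟩ := exists_disjoint_mul_support_eq_univ ρ hb hα hρ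
  refine ⟨ρ * g, hτ_supp, hτ, fun i ↦ Commute.mul_right ?_ (hρg.mono (hsupp i) subset_rfl).commute⟩
  refine noncommProd_commute _ _ _ _ fun j _ ↦ ?_
  rcases eq_or_ne i j with rfl | hij
  · exact Commute.self_pow _ _
  · exact (hdisj hij).commute.pow_right _

end Equiv.Perm

open Equiv.Perm in
theorem exists_conj_mem_blockStab_of_commute {n b : ℕ} {τ : Perm (Fin n)}
    (hsupp : τ.support = univ) (hτ : ∀ k ∈ τ.cycleType, k = b) :
    ∃ k : Perm (Fin n), ∀ ψ, Commute ψ τ → k * ψ * k⁻¹ ∈ blockStab n b := by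
  classical
  have hfib : ∀ q : Quotient (SameCycle.setoid τ), Nat.card {x // Quotient.mk _ x = q} = b := by
    rintro ⟨x⟩
    rw [← hτ _ (card_sameCycle_mem_cycleType (hsupp ▸ mem_univ x))]
    exact Nat.card_congr (Equiv.subtypeEquivRight fun y ↦ Quotient.eq)
  obtain ⟨e, he⟩ := exists_equiv_prod_fin_of_card_fiber _ hfib
  have hcard : Fintype.card (Quotient (SameCycle.setoid τ)) * b = n := by
    simpa using (Fintype.card_congr e).symm
  -- `k` sends the `j`-th cycle of `τ`, in some enumeration, onto the `j`-th block `[j b, j b + b)`.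
  refine ⟨e.trans (((Fintype.equivFin _).prodCongr (Equiv.refl _)).trans
    (finProdFinEquiv.trans (finCongr hcard))), fun ψ hψ ↦ ?_⟩
  rw [blockStab_eq_kerStab]
  refine conj_mem_kerStab (fun x y ↦ ?_) (mem_kerStab_mk_sameCycle_of_commute hψ)
  have hb : 0 < b := (e x).2.pos
  simp [finProdFinEquiv_apply_val, Nat.add_mul_div_left _ _ hb, Nat.div_eq_of_lt, he, Fin.val_inj]

theorem closure_disjoint_cycles_le_conj_blockStab_general (n b m : ℕ) (hb : 2 ≤ b)
    (hn : n = b * m) (l : ℕ) (σ : Fin l → Equiv.Perm (Fin n))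
    (hcyc : ∀ i, (σ i).IsCycle)
    (hdisj : ∀ i j, i ≠ j → (σ i).Disjoint (σ j))
    (hdvd : ∀ i, b ∣ (σ i).support.card) :
    ∃ k : Equiv.Perm (Fin n),
      ∀ q ∈ Subgroup.closure (Set.range σ), k * q * k⁻¹ ∈ blockStab n b := by
  obtain ⟨τ, hτ_supp, hτ, hcomm⟩ := Perm.exists_commute_of_pairwise_disjoint_isCycle hcyc
    (fun i j ↦ hdisj i j) hb hdvd (by simp [hn])
  obtain ⟨k, hk⟩ := exists_conj_mem_blockStab_of_commute hτ_supp hτ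
  have hclosure : Subgroup.closure (Set.range σ) ≤ Subgroup.centralizer {τ} := by
    rw [Subgroup.closure_le]
    rintro _ ⟨i, rfl⟩
    exact Subgroup.mem_centralizer_singleton_iff.2 (hcomm i).eq
  exact ⟨k, fun q hq ↦ hk q (Subgroup.mem_centralizer_singleton_iff.1 (hclosure hq))⟩

/-- Disjoint cycles whose lengths are all divisible by `b` generate a subgroup of `Sₙ`
(`n = b * m`) contained in a conjugate of `S_b ≀ S_m`. -/
theorem closure_disjoint_cycles_le_conj_blockStab (n b m : ℕ) (hb : 2 ≤ b) (hm : 2 ≤ m)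
    (hn : n = b * m) (l : ℕ) (σ : Fin l → Equiv.Perm (Fin n))
    (hcyc : ∀ i, (σ i).IsCycle)
    (hdisj : ∀ i j, i ≠ j → (σ i).Disjoint (σ j))
    (hdvd : ∀ i, b ∣ (σ i).support.card) :
    ∃ k : Equiv.Perm (Fin n),
      ∀ q ∈ Subgroup.closure (Set.range σ), k * q * k⁻¹ ∈ blockStab n b :=
  closure_disjoint_cycles_le_conj_blockStab_general n b m hb hn l σ hcyc hdisj hdvd
end

section
/- Let σ ∈ S_n and let b ≥ 2 be an integer dividing n such that the size of every orbit of σ on {1,…,n} is divisible by b. Then σ is contained in a conjugate of the wreath product S_b ≀ S_{n/b}; equivalently, there is a partition of {1,…,n} into n/b blocks of size b whose blocks are permuted by σ. -/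
/-!
A cycle of `σ` of length `b * t` falls apart into `t` orbits of `σ ^ t`, each of size `b`, and
`σ` permutes these orbits because it commutes with `σ ^ t`. Together they form a `σ`-invariant
partition of `Fin n` into blocks of size `b`; relabelling the points so that the blocks become
the intervals `[j * b, j * b + b)` conjugates `σ` into `blockStab n b`.
-/

open Function

namespace Equiv.Perm

variable {α : Type*} [Finite α]

theorem card_setOf_sameCycle (σ : Perm α) (a : α) :
    Nat.card {x | σ.SameCycle a x} = minimalPeriod σ a := by
  have horbit : {x | σ.SameCycle a x} = MulAction.orbit (Subgroup.zpowers σ) a := by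
    ext x
    simp only [Set.mem_ofPred_eq, MulAction.mem_orbit_iff, Subtype.exists,
      Subgroup.mem_zpowers_iff]
    exact ⟨fun ⟨i, h⟩ => ⟨_, ⟨i, rfl⟩, h⟩,
      fun ⟨_, ⟨i, rfl⟩, h⟩ => ⟨i, h⟩⟩
  have := Fintype.ofFinite (MulAction.orbit (Subgroup.zpowers σ) a)
  rw [horbit, Nat.card_eq_fintype_card, ← MulAction.minimalPeriod_eq_card]
  rfl

theorem SameCycle.minimalPeriod_eq {σ : Perm α} {x y : α} (h : σ.SameCycle x y) :
    minimalPeriod σ y = minimalPeriod σ x := by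
  obtain ⟨i, rfl⟩ := h.exists_nat_pow_eq
  rw [coe_pow, minimalPeriod_apply_iterate (σ.injective.mem_periodicPts x)]

theorem minimalPeriod_pow_div_eq {σ : Perm α} {x : α} {b : ℕ} (hb : b ∣ minimalPeriod σ x) :
    minimalPeriod ⇑(σ ^ (minimalPeriod σ x / b)) x = b := by
  have hx := σ.injective.mem_periodicPts x
  rw [coe_pow, minimalPeriod_iterate_eq_div_gcd' hx,
    Nat.gcd_eq_right (Nat.div_dvd_of_dvd hb),
    Nat.div_div_self hb (minimalPeriod_pos_of_mem_periodicPts hx).ne']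

def cycleBlockSetoid (σ : Perm α) (b : ℕ) : Setoid α where
  r x y := (σ ^ (minimalPeriod σ x / b)).SameCycle x y
  iseqv := by
    refine ⟨fun x => SameCycle.refl _ _, fun {x y} h => ?_, fun {x y z} hxy hyz => ?_⟩
    · rw [h.of_pow.minimalPeriod_eq]
      exact h.symm
    · rw [hxy.of_pow.minimalPeriod_eq] at hyz
      exact hxy.trans hyz

theorem cycleBlockSetoid_apply_iff (σ : Perm α) (b : ℕ) (x y : α) :
    σ.cycleBlockSetoid b (σ x) (σ y) ↔ σ.cycleBlockSetoid b x y := by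
  change SameCycle _ _ _ ↔ SameCycle _ _ _
  rw [(sameCycle_apply_right.2 (SameCycle.refl σ x)).minimalPeriod_eq]
  conv_lhs => rw [← (Commute.self_pow σ (minimalPeriod σ x / b)).mul_inv_cancel]
  rw [sameCycle_conj, coe_inv, symm_apply_apply, symm_apply_apply]

theorem card_cycleBlockSetoid {σ : Perm α} {b : ℕ} {x : α} (hb : b ∣ minimalPeriod σ x) :
    Nat.card {y // σ.cycleBlockSetoid b x y} = b :=
  (card_setOf_sameCycle _ x).trans (minimalPeriod_pow_div_eq hb)

end Equiv.Perm

namespace Setoid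

variable {α : Type*} [Finite α]

theorem exists_equiv_prod_fin (s : Setoid α) {b : ℕ} (hs : ∀ x, Nat.card {y // s x y} = b) :
    ∃ e : α ≃ Quotient s × Fin b, ∀ x, (e x).1 = ⟦x⟧ := by
  have hfiber (q : Quotient s) : {x // ⟦x⟧ = q} ≃ Fin b := by
    refine Finite.equivFinOfCardEq ?_
    induction q using Quotient.inductionOn with
    | h x =>
      rw [← hs x]
      exact Nat.card_congr (Equiv.subtypeEquivRight fun y => Quotient.eq.trans s.comm')
  exact ⟨(Equiv.sigmaFiberEquiv _).symm.trans
    ((Equiv.sigmaCongrRight hfiber).trans (Equiv.sigmaEquivProd _ _)), fun _ => rfl⟩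

theorem exists_perm_fin_div_eq_div_iff {n b : ℕ} (s : Setoid (Fin n))
    (hs : ∀ x, Nat.card {y // s x y} = b) :
    ∃ k : Equiv.Perm (Fin n), ∀ x y, (k x : ℕ) / b = (k y : ℕ) / b ↔ s x y := by
  obtain ⟨e, he⟩ := s.exists_equiv_prod_fin hs
  set N := Nat.card (Quotient s)
  have eQ : Quotient s ≃ Fin N := Finite.equivFin _
  have hn : N * b = n := by
    simpa [N] using ((Nat.card_congr e).trans (Nat.card_prod _ _)).symm
  let k : Equiv.Perm (Fin n) :=
    (e.trans (eQ.prodCongr (Equiv.refl _))).trans (finProdFinEquiv.trans (finCongr hn))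
  -- `finProdFinEquiv` sends `(i, j)` to `j + b * i`
  have hk (x : Fin n) : (k x : ℕ) / b = eQ ⟦x⟧ := by
    have hb : 0 < b := (e x).2.pos
    simp [k, he, Nat.add_mul_div_left _ _ hb, Nat.div_eq_of_lt (e x).2.isLt]
  refine ⟨k, fun x y => ?_⟩
  rw [hk, hk, Fin.val_inj, eQ.apply_eq_iff_eq, Quotient.eq]

end Setoid

theorem mul_mul_inv_mem_blockStab {n b : ℕ} {k σ : Equiv.Perm (Fin n)} {s : Setoid (Fin n)}
    (hk : ∀ x y, (k x : ℕ) / b = (k y : ℕ) / b ↔ s x y)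
    (hσ : ∀ x y, s (σ x) (σ y) ↔ s x y) :
    k * σ * k⁻¹ ∈ blockStab n b := by
  intro a c
  simp only [Equiv.Perm.mul_apply]
  rw [hk, hσ, ← hk, Equiv.Perm.coe_inv, Equiv.apply_symm_apply,
    Equiv.apply_symm_apply]

theorem mem_conj_blockStab_of_dvd_orbits_general (n b : ℕ)
    (σ : Equiv.Perm (Fin n))
    (horb : ∀ a : Fin n, b ∣ Nat.card {x : Fin n | ∃ k : ℤ, (σ ^ k) a = x}) :
    ∃ k : Equiv.Perm (Fin n), k * σ * k⁻¹ ∈ blockStab n b := by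
  have hperiod (a : Fin n) : b ∣ minimalPeriod σ a := σ.card_setOf_sameCycle a ▸ horb a
  obtain ⟨k, hk⟩ := (σ.cycleBlockSetoid b).exists_perm_fin_div_eq_div_iff
    fun x => Equiv.Perm.card_cycleBlockSetoid (hperiod x)
  exact ⟨k, mul_mul_inv_mem_blockStab hk (σ.cycleBlockSetoid_apply_iff b)⟩

/-- If `b ≥ 2` divides `n` and the size of every orbit of `σ ∈ Sₙ` is divisible by `b`,
then `σ` lies in a conjugate of `S_b ≀ S_{n/b}`. -/
theorem mem_conj_blockStab_of_dvd_orbits (n b : ℕ) (hb : 2 ≤ b) (hdvd : b ∣ n)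
    (σ : Equiv.Perm (Fin n))
    (horb : ∀ a : Fin n, b ∣ Nat.card {x : Fin n | ∃ k : ℤ, (σ ^ k) a = x}) :
    ∃ k : Equiv.Perm (Fin n), k * σ * k⁻¹ ∈ blockStab n b :=
  mem_conj_blockStab_of_dvd_orbits_general n b σ horb
end

section
/- Let n ≥ 4 be even and let M = ⟨σ⟩ × ⟨τ⟩ be a special metacyclic subgroup of S_n with τ = (i j) a transposition, σ(i) = i and σ(j) = j. If every orbit of σ other than the fixed points {i} and {j} has even size, then M is contained in a conjugate of the wreath product S_2 ≀ S_{n/2}; equivalently, there is a partition of {1,…,n} into n/2 blocks of size 2 whose blocks are permuted by both σ and τ. -/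
open Function Equiv Equiv.Perm

namespace Equiv.Perm

variable {α : Type*}

theorem minimalPeriod_apply_of_commute {σ π : Perm α} (h : Commute σ π) (a : α) :
    minimalPeriod σ (π a) = minimalPeriod σ a := by
  refine minimalPeriod_eq_minimalPeriod_iff.mpr fun k => ?_
  simp only [IsPeriodicPt, IsFixedPt, iterate_eq_pow]
  rw [← mul_apply, (h.pow_left k).eq, mul_apply, π.injective.eq_iff]

theorem minimalPeriod_pos [Finite α] (σ : Perm α) (a : α) : 0 < minimalPeriod σ a :=
  minimalPeriod_pos_of_mem_periodicPts
    ⟨orderOf σ, orderOf_pos σ, by simp [IsPeriodicPt, IsFixedPt, iterate_eq_pow, pow_orderOf_eq_one]⟩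

theorem pow_minimalPeriod_div_two_apply_injective (σ : Perm α) :
    Injective fun a => (σ ^ (minimalPeriod σ a / 2)) a := by
  intro a b hab
  have hperiod : minimalPeriod σ a = minimalPeriod σ b := by
    rw [← minimalPeriod_apply_of_commute (Commute.self_pow σ (minimalPeriod σ a / 2)),
      ← minimalPeriod_apply_of_commute (Commute.self_pow σ (minimalPeriod σ b / 2)) b]
    exact congrArg _ hab
  simp only [hperiod] at hab
  exact (σ ^ _).injective hab

variable [Finite α]

noncomputable def halfTurn (σ : Perm α) : Perm α :=
  ofBijective _ (Finite.injective_iff_bijective.mp (pow_minimalPeriod_div_two_apply_injective σ))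

theorem halfTurn_apply (σ : Perm α) (a : α) :
    halfTurn σ a = (σ ^ (minimalPeriod σ a / 2)) a := rfl

theorem commute_halfTurn {σ π : Perm α} (h : Commute σ π) : Commute (halfTurn σ) π := by
  refine Equiv.ext fun a => ?_
  rw [mul_apply, mul_apply, halfTurn_apply, halfTurn_apply, minimalPeriod_apply_of_commute h,
    ← mul_apply, (h.pow_left _).eq, mul_apply]

theorem halfTurn_apply_of_apply_eq_self {σ : Perm α} {a : α} (ha : σ a = a) :
    halfTurn σ a = a :=
  pow_apply_eq_self_of_apply_eq_self ha _

theorem halfTurn_halfTurn_apply {σ : Perm α} {a : α} (ha : Even (minimalPeriod σ a)) :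
    halfTurn σ (halfTurn σ a) = a := by
  rw [halfTurn_apply, halfTurn_apply, minimalPeriod_apply_of_commute (Commute.self_pow σ _),
    ← mul_apply, ← pow_add, ← two_mul, Nat.mul_div_cancel' (even_iff_two_dvd.mp ha),
    ← iterate_eq_pow, iterate_minimalPeriod]

theorem halfTurn_apply_ne {σ : Perm α} {a : α} (ha : Even (minimalPeriod σ a)) :
    halfTurn σ a ≠ a := by
  intro h
  have hpos := minimalPeriod_pos σ a
  obtain ⟨r, hr⟩ := ha
  refine not_isPeriodicPt_of_pos_of_lt_minimalPeriod (f := σ) (x := a)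
    (n := minimalPeriod σ a / 2) (by omega) (by omega) ?_
  rw [IsPeriodicPt, IsFixedPt, iterate_eq_pow]
  exact h

theorem halfTurn_sq_eq_one {σ : Perm α} (h : ∀ a, σ a = a ∨ Even (minimalPeriod σ a)) :
    halfTurn σ ^ 2 = 1 := by
  ext a
  rw [sq, mul_apply, one_apply]
  rcases h a with hfix | heven
  · rw [halfTurn_apply_of_apply_eq_self hfix, halfTurn_apply_of_apply_eq_self hfix]
  · rw [halfTurn_halfTurn_apply heven]

theorem natCard_setOf_zpow_apply_eq (σ : Perm α) (a : α) :
    Nat.card {x | ∃ k : ℤ, (σ ^ k) a = x} = minimalPeriod σ a := by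
  classical
  have := Fintype.ofFinite α
  have hset : {x | ∃ k : ℤ, (σ ^ k) a = x} = MulAction.orbit (Subgroup.zpowers σ) a := by
    ext x
    simp [MulAction.mem_orbit_iff, Subgroup.exists_zpowers, Subgroup.smul_def]
  rw [hset, Nat.card_eq_fintype_card, ← MulAction.minimalPeriod_eq_card]
  rfl

theorem swap_mul_halfTurn_sq_eq_one [DecidableEq α] {σ : Perm α} {i j : α}
    (hσi : σ i = i) (hσj : σ j = j) (heven : ∀ a, a ≠ i → a ≠ j → Even (minimalPeriod σ a))
    (hcomm : Commute σ (swap i j)) :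
    (swap i j * halfTurn σ) ^ 2 = 1 := by
  have hh : halfTurn σ ^ 2 = 1 := halfTurn_sq_eq_one fun a => by
    by_cases hai : a = i
    · exact .inl (hai ▸ hσi)
    by_cases haj : a = j
    · exact .inl (haj ▸ hσj)
    exact .inr (heven a hai haj)
  rw [(commute_halfTurn hcomm).symm.mul_pow, hh, sq, swap_mul_self, one_mul]

theorem swap_mul_halfTurn_apply_ne [DecidableEq α] {σ : Perm α} {i j : α}
    (hσi : σ i = i) (hσj : σ j = j) (heven : ∀ a, a ≠ i → a ≠ j → Even (minimalPeriod σ a))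
    (hij : i ≠ j) (a : α) :
    (swap i j * halfTurn σ) a ≠ a := by
  rw [mul_apply]
  by_cases hai : a = i
  · subst hai
    rw [halfTurn_apply_of_apply_eq_self hσi, swap_apply_left]
    exact hij.symm
  by_cases haj : a = j
  · subst haj
    rw [halfTurn_apply_of_apply_eq_self hσj, swap_apply_right]
    exact hij
  have hhi : halfTurn σ a ≠ i := fun h =>
    hai ((halfTurn σ).injective (h.trans (halfTurn_apply_of_apply_eq_self hσi).symm))
  have hhj : halfTurn σ a ≠ j := fun h =>
    haj ((halfTurn σ).injective (h.trans (halfTurn_apply_of_apply_eq_self hσj).symm))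
  rw [swap_apply_of_ne_of_ne hhi hhj]
  exact halfTurn_apply_ne (heven a hai haj)

end Equiv.Perm

namespace Equiv.Perm

variable {α : Type*} [Fintype α] [DecidableEq α]

theorem cycleType_eq_replicate_of_sq_eq_one {p : Perm α}
    (hp : p ^ 2 = 1) (hfix : ∀ a, p a ≠ a) :
    p.cycleType = Multiset.replicate (Fintype.card α / 2) 2 := by
  have hsupp : p.support = Finset.univ :=
    Finset.eq_univ_of_forall fun a => mem_support.mpr (hfix a)
  have hsum := p.sum_cycleType
  rw [cycleType_of_pow_prime_eq_one hp] at hsum ⊢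
  rw [Multiset.sum_replicate, hsupp, Finset.card_univ, smul_eq_mul] at hsum
  congr 1
  omega

theorem isConj_of_sq_eq_one_of_forall_apply_ne {p q : Perm α}
    (hp : p ^ 2 = 1) (hpfix : ∀ a, p a ≠ a) (hq : q ^ 2 = 1) (hqfix : ∀ a, q a ≠ a) :
    IsConj p q := by
  rw [isConj_iff_cycleType_eq, cycleType_eq_replicate_of_sq_eq_one hp hpfix,
    cycleType_eq_replicate_of_sq_eq_one hq hqfix]

end Equiv.Perm

def finPairSwap {n : ℕ} (hn : Even n) : Perm (Fin n) :=
  Involutive.toPerm (fun a => ⟨if (a : ℕ) % 2 = 0 then a + 1 else a - 1, by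
    obtain ⟨m, rfl⟩ := hn; split_ifs <;> omega⟩) (by
    intro a
    ext
    simp only
    split_ifs <;> omega)

section finPairSwap

variable {n : ℕ} (hn : Even n)

theorem finPairSwap_val (a : Fin n) :
    (finPairSwap hn a : ℕ) = if (a : ℕ) % 2 = 0 then (a : ℕ) + 1 else (a : ℕ) - 1 := rfl

theorem finPairSwap_sq : finPairSwap hn ^ 2 = 1 := by
  ext a
  simp only [sq, mul_apply, finPairSwap_val, one_apply]
  split_ifs <;> omega

theorem finPairSwap_apply_ne (a : Fin n) : finPairSwap hn a ≠ a := by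
  rw [ne_eq, Fin.ext_iff, finPairSwap_val]
  split_ifs <;> omega

theorem div_two_eq_div_two_iff (a c : Fin n) :
    (a : ℕ) / 2 = (c : ℕ) / 2 ↔ c = a ∨ c = finPairSwap hn a := by
  rw [Fin.ext_iff, Fin.ext_iff, finPairSwap_val]
  obtain ⟨m, rfl⟩ := hn
  split_ifs <;> omega

theorem mem_blockStab_two_of_commute {x : Perm (Fin n)} (hx : Commute x (finPairSwap hn)) :
    x ∈ blockStab n 2 := by
  intro a c
  rw [div_two_eq_div_two_iff hn, div_two_eq_div_two_iff hn, ← mul_apply, ← hx.eq, mul_apply,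
    x.injective.eq_iff, x.injective.eq_iff]

end finPairSwap

theorem specialMetacyclic_le_conj_blockStab_two_general (n : ℕ) (hne : Even n)
    (M : Subgroup (Equiv.Perm (Fin n))) (σ τ : Equiv.Perm (Fin n)) (i j : Fin n)
    (hij : i ≠ j) (hτ : τ = Equiv.swap i j) (hσi : σ i = i) (hσj : σ j = j)
    (hcomm : Commute σ τ)
    (hM : M = Subgroup.closure {σ, τ})
    (horb : ∀ a : Fin n, a ≠ i → a ≠ j →
      Even (Nat.card {x : Fin n | ∃ k : ℤ, (σ ^ k) a = x})) :
    ∃ k : Equiv.Perm (Fin n), ∀ x ∈ M, k * x * k⁻¹ ∈ blockStab n 2 := by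
  subst hτ hM
  have hperiod : ∀ a, a ≠ i → a ≠ j → Even (minimalPeriod σ a) := fun a hai haj =>
    natCard_setOf_zpow_apply_eq σ a ▸ horb a hai haj
  set p := swap i j * halfTurn σ
  have hσp : Commute σ p := hcomm.mul_right (commute_halfTurn (Commute.refl σ)).symm
  have hτp : Commute (swap i j) p := (Commute.refl _).mul_right (commute_halfTurn hcomm).symm
  obtain ⟨k, hk⟩ := isConj_iff.mp <| isConj_of_sq_eq_one_of_forall_apply_ne
    (swap_mul_halfTurn_sq_eq_one hσi hσj hperiod hcomm)
    (swap_mul_halfTurn_apply_ne hσi hσj hperiod hij) (finPairSwap_sq hne)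
    (finPairSwap_apply_ne hne)
  refine ⟨k, fun x hx => mem_blockStab_two_of_commute hne ?_⟩
  have hxp : Commute x p := by
    refine Subgroup.mem_centralizer_singleton_iff.mp ((Subgroup.closure_le _).mpr ?_ hx)
    rintro y (rfl | rfl)
    exacts [Subgroup.mem_centralizer_singleton_iff.mpr hσp.eq,
      Subgroup.mem_centralizer_singleton_iff.mpr hτp.eq]
  rw [← hk]
  simpa only [MulAut.conj_apply] using hxp.map (MulAut.conj k)

/-- Let `n ≥ 4` be even and `M = ⟨σ⟩ × ⟨τ⟩` a special metacyclic subgroup of `Sₙ` with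
`τ = (i j)`, `σ i = i`, `σ j = j`. If every orbit of `σ` other than `{i}` and `{j}` has
even size, then `M` lies in a conjugate of `S₂ ≀ S_{n/2}`. -/
theorem specialMetacyclic_le_conj_blockStab_two (n : ℕ) (hn : 4 ≤ n) (hne : Even n)
    (M : Subgroup (Equiv.Perm (Fin n))) (σ τ : Equiv.Perm (Fin n)) (i j : Fin n)
    (hij : i ≠ j) (hτ : τ = Equiv.swap i j) (hσi : σ i = i) (hσj : σ j = j)
    (heven : Even (orderOf σ)) (hcomm : Commute σ τ)
    (hint : Subgroup.zpowers σ ⊓ Subgroup.zpowers τ = ⊥)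
    (hM : M = Subgroup.closure {σ, τ})
    (horb : ∀ a : Fin n, a ≠ i → a ≠ j →
      Even (Nat.card {x : Fin n | ∃ k : ℤ, (σ ^ k) a = x})) :
    ∃ k : Equiv.Perm (Fin n), ∀ x ∈ M, k * x * k⁻¹ ∈ blockStab n 2 :=
  specialMetacyclic_le_conj_blockStab_two_general n hne M σ τ i j hij hτ hσi hσj hcomm hM horb
end

section
/- For every integer n ≥ 4, γ'(S_n) ≤ h(n). -/
open Equiv Pointwise

/-- An intersective polynomial. -/
def IsIntersective (f : Polynomial ℤ) : Prop :=
  f.Monic ∧ (∀ q : ℚ, Polynomial.aeval q f ≠ 0) ∧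
    ∀ m : ℕ, 0 < m → ∃ a : ℤ, (m : ℤ) ∣ f.eval a

/-- `r(Sₙ)`: the least number of irreducible factors of an intersective polynomial with
Galois group `Sₙ` over `ℚ`. -/
noncomputable def rS (n : ℕ) : ℕ :=
  sInf {k | ∃ f : Polynomial ℤ, IsIntersective f ∧
    (∃ gs : Multiset (Polynomial ℤ), Multiset.card gs = k ∧
      (∀ g ∈ gs, g.Monic ∧ 0 < g.natDegree ∧ Irreducible g) ∧ f = gs.prod) ∧
    Nonempty ((f.map (algebraMap ℤ ℚ)).Gal ≃* Equiv.Perm (Fin n))}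

/-- Number of distinct prime factors of `n`. -/
def nuFun (n : ℕ) : ℕ := n.primeFactors.card

/-- The smallest prime factor `p₁` of `n`. -/
def pOne (n : ℕ) : ℕ := n.minFac

/-- The second smallest prime factor `p₂` of `n`. -/
def pTwo (n : ℕ) : ℕ := (n / (pOne n) ^ (n.factorization (pOne n))).minFac

/-- The function `g`:
`g(n) = (n/2)(1 - 1/p₁)` if `ν(n) = 1, α₁ = 1`;
`g(n) = (n/2)(1 - 1/p₁) + 1` if `ν(n) = 1, α₁ ≥ 2`;
`g(n) = (n/2)(1 - 1/p₁)(1 - 1/p₂) + 1` if `ν(n) = 2, (α₁, α₂) = (1,1)`;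
`g(n) = (n/2)(1 - 1/p₁)(1 - 1/p₂) + 2` otherwise.
(All the divisions below are exact.) -/
def gFun (n : ℕ) : ℕ :=
  if nuFun n = 1 then
    (if n.factorization (pOne n) = 1 then n * (pOne n - 1) / (2 * pOne n)
     else n * (pOne n - 1) / (2 * pOne n) + 1)
  else if nuFun n = 2 ∧ n.factorization (pOne n) = 1 ∧ n.factorization (pTwo n) = 1 then
    n * ((pOne n - 1) * (pTwo n - 1)) / (2 * pOne n * pTwo n) + 1
  else n * ((pOne n - 1) * (pTwo n - 1)) / (2 * pOne n * pTwo n) + 2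

/-- `φ(I; n)`: the number of positive integers in the open interval `(a, b)` coprime to `n`. -/
noncomputable def phiI (a b : ℚ) (n : ℕ) : ℕ :=
  Nat.card {i : ℕ | 0 < i ∧ a < (i : ℚ) ∧ (i : ℚ) < b ∧ Nat.Coprime i n}

/-- The function `h`:
`h(n) = ⌊n/3⌋ + ν(n) + φ((n/3, n/2); n)` for `n` even, and
`h(n) = ⌊n/4⌋ + ν(n) + φ((n/4, n/2); n) + 1` for `n` odd. -/
noncomputable def hFun (n : ℕ) : ℕ :=
  if Even n then n / 3 + nuFun n + phiI ((n : ℚ) / 3) ((n : ℚ) / 2) n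
  else n / 4 + nuFun n + phiI ((n : ℚ) / 4) ((n : ℚ) / 2) n + 1


/-!
Put `b = 3` for `n` even and `b = 4` for `n` odd. The special basic set consists of the
stabilizers of one `k`-subset for each `k ≤ n / b` and each `k ∈ (n / b, n / 2)` coprime to `n`,
the centralizer of a fixed permutation of cycle type `p ^ (n / p)` for each prime `p ∣ n`, and,
for `n` odd, the alternating group.

A permutation with a fixed point or a cycle of length at most `n / b` stabilizes a small set.
Otherwise it has fewer than `b` cycles: a single `n`-cycle; two cycles of lengths `a ≤ c`, where
either `a` is coprime to `n` (so `a ∈ (n / b, n / 2)`) or some prime divides `a`, `c` and `n`;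
or, for `n` odd, three cycles, which is an even permutation. If a prime `p` divides every cycle
length of a fixed-point-free `σ`, rotating each `ℓ`-cycle of `σ` by `ℓ / p` steps gives a
fixed-point-free permutation of order `p` commuting with `σ`, and it is conjugate to the chosen
one of cycle type `p ^ (n / p)`.

Cyclic subgroups are covered through their generators. A special metacyclic subgroup
`⟨σ, (a b)⟩` centralizes `(a b)`, i.e. stabilizes `{a, b}`: for `n ≥ 5` the stabilizer of a
`2`-set is in the family, and for `n = 4` that stabilizer centralizes `(a b)(c d)`.
-/

open MulAction Finset

theorem IsConj.exists_forall_conj_mem_centralizer {G : Type*} [Group G] {t c : G}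
    (h : IsConj t c) :
    ∃ g : G, ∀ x ∈ Subgroup.centralizer {t}, g * x * g⁻¹ ∈ Subgroup.centralizer {c} := by
  obtain ⟨g, rfl⟩ := isConj_iff.mp h
  refine ⟨g, fun x hx => ?_⟩
  rw [Subgroup.mem_centralizer_singleton_iff] at hx ⊢
  simp only [mul_assoc, inv_mul_cancel_left]
  rw [← mul_assoc x, hx, mul_assoc]

theorem exists_forall_conj_mem_of_isCyclic {G : Type*} [Group G] {δ : Finset (Subgroup G)}
    (hδ : ∀ g : G, ∃ H ∈ δ, ∃ k : G, k * g * k⁻¹ ∈ H) {M : Subgroup G}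
    (hM : IsCyclic M) :
    ∃ H ∈ δ, ∃ k : G, ∀ x ∈ M, k * x * k⁻¹ ∈ H := by
  obtain ⟨g, hg⟩ := hM.exists_generator
  obtain ⟨H, hH, k, hk⟩ := hδ g
  refine ⟨H, hH, k, fun x hx => ?_⟩
  obtain ⟨i, hi⟩ := Subgroup.mem_zpowers_iff.mp (hg ⟨x, hx⟩)
  have hi : (g : G) ^ i = x := congrArg Subtype.val hi
  rw [← hi, ← conj_zpow]
  exact H.zpow_mem hk i

namespace Equiv.Perm

variable {α : Type*} [DecidableEq α]

theorem exists_smul_finset_eq {s t : Finset α} (h : #s = #t) : ∃ g : Perm α, g • s = t := by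
  have := Set.powersetCard.isPretransitive (α := α) (n := #t)
  obtain ⟨g, hg⟩ := exists_smul_eq (Perm α) (⟨s, h⟩ : Set.powersetCard α #t) ⟨t, rfl⟩
  exact ⟨g, by simpa using congrArg Subtype.val hg⟩

variable (α) in
noncomputable def stabilizerOfCard (k : ℕ) : Subgroup (Perm α) :=
  stabilizer (Perm α) (Classical.epsilon fun s : Finset α => #s = k)

theorem exists_forall_conj_mem_stabilizerOfCard (s : Finset α) :
    ∃ g : Perm α, ∀ x ∈ stabilizer (Perm α) s,
      g * x * g⁻¹ ∈ stabilizerOfCard α #s := by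
  obtain ⟨g, hg⟩ := exists_smul_finset_eq
    (Classical.epsilon_spec (p := fun t : Finset α => #t = #s) ⟨s, rfl⟩).symm
  refine ⟨g, fun x hx => ?_⟩
  rw [stabilizerOfCard, mem_stabilizer_iff, ← hg, mul_smul, mul_smul, inv_smul_smul,
    mem_stabilizer_iff.mp hx]

variable [Fintype α]

theorem mem_cycleType_iff_card_support_cycleOf {σ : Perm α} {l : ℕ} :
    l ∈ σ.cycleType ↔ ∃ x, σ x ≠ x ∧ #(σ.cycleOf x).support = l := by
  rw [cycleType_def, Multiset.mem_map]
  constructor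
  · rintro ⟨c, hc, rfl⟩
    obtain ⟨x, hx⟩ := (mem_cycleFactorsFinset_iff.mp hc).1.nonempty_support
    refine ⟨x, mem_support.mp (mem_cycleFactorsFinset_support_le hc hx), ?_⟩
    rw [cycle_is_cycleOf hx hc]
    rfl
  · rintro ⟨x, hx, rfl⟩
    exact ⟨σ.cycleOf x, cycleOf_mem_cycleFactorsFinset_iff.mpr (mem_support.mpr hx), rfl⟩

theorem exists_mem_stabilizer_card_eq_of_mem_cycleType {σ : Perm α} {l : ℕ}
    (hl : l ∈ σ.cycleType) : ∃ s : Finset α, #s = l ∧ σ ∈ stabilizer (Perm α) s := by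
  obtain ⟨x, -, rfl⟩ := mem_cycleType_iff_card_support_cycleOf.mp hl
  exact ⟨_, rfl, mem_stabilizer_finset'.mpr fun y hy =>
    (σ.isCycleOn_support_cycleOf x).1.mapsTo hy⟩

theorem sum_cycleType_of_forall_apply_ne {σ : Perm α} (hfix : ∀ x, σ x ≠ x) :
    σ.cycleType.sum = Fintype.card α := by
  rw [sum_cycleType, eq_univ_iff_forall.mpr fun x => mem_support.mpr (hfix x), card_univ]

theorem cycleType_eq_replicate_of_pow_prime_eq_one {t : Perm α} {p : ℕ} (hp : p.Prime)
    (ht : t ^ p = 1) (hfix : ∀ x, t x ≠ x) :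
    t.cycleType = Multiset.replicate (Fintype.card α / p) p := by
  have hl : ∀ l ∈ t.cycleType, l = p := fun l hl =>
    ((Nat.dvd_prime hp).mp ((dvd_of_mem_cycleType hl).trans (orderOf_dvd_of_pow_eq_one ht))
      ).resolve_left (one_lt_of_mem_cycleType hl).ne'
  have hrep := Multiset.eq_replicate.mpr ⟨rfl, hl⟩
  have hsum : Multiset.card t.cycleType * p = Fintype.card α := by
    rw [← smul_eq_mul, ← Multiset.sum_replicate, ← hrep,
      sum_cycleType_of_forall_apply_ne hfix]
  rw [hrep, ← hsum, Nat.mul_div_cancel _ hp.pos]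

theorem centralizer_swap_eq_stabilizer {a b : α} (hab : a ≠ b) :
    Subgroup.centralizer {swap a b} = stabilizer (Perm α) ({a, b} : Finset α) := by
  ext x
  rw [Subgroup.mem_centralizer_singleton_iff, ← mul_inv_eq_iff_eq_mul,
    ← swap_apply_apply, mem_stabilizer_iff, smul_finset_insert, smul_finset_singleton,
    Perm.smul_def, Perm.smul_def]
  constructor
  · intro h
    rw [← support_swap hab, ← support_swap (x.injective.ne hab), h]
  · intro h
    have hxa : x a ∈ ({a, b} : Finset α) := h ▸ mem_insert_self _ _
    have hxb : x b ∈ ({a, b} : Finset α) := h ▸ mem_insert_of_mem (mem_singleton_self _)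
    simp only [mem_insert, mem_singleton] at hxa hxb
    rcases hxa with hxa | hxa <;> rcases hxb with hxb | hxb
    · exact absurd (x.injective (hxa.trans hxb.symm)) hab
    · rw [hxa, hxb]
    · rw [hxa, hxb, swap_comm]
    · exact absurd (x.injective (hxa.trans hxb.symm)) hab

noncomputable def subrotation (σ : Perm α) (p : ℕ) : Perm α :=
  Equiv.ofBijective (fun x => (σ ^ (#(σ.cycleOf x).support / p)) x) <|
    Finite.injective_iff_bijective.mp fun x y hxy => by
      have hsame : σ.SameCycle x y := by
        have h := (SameCycle.refl σ x).pow_right (n := #(σ.cycleOf x).support / p)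
        rw [show (σ ^ (#(σ.cycleOf x).support / p)) x = _ from hxy] at h
        exact h.of_pow_right
      rw [hsame.cycleOf_eq] at hxy
      exact (σ ^ _).injective hxy

theorem subrotation_apply (σ : Perm α) (p : ℕ) (x : α) :
    subrotation σ p x = (σ ^ (#(σ.cycleOf x).support / p)) x :=
  rfl

theorem commute_subrotation (σ : Perm α) (p : ℕ) : Commute σ (subrotation σ p) := by
  ext x
  simp only [Perm.mul_apply, subrotation_apply, cycleOf_self_apply]
  rw [← Perm.mul_apply, ← Perm.mul_apply, ← pow_succ, ← pow_succ']

theorem subrotation_pow_apply (σ : Perm α) (p j : ℕ) (x : α) :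
    (subrotation σ p ^ j) x = (σ ^ (j * (#(σ.cycleOf x).support / p))) x := by
  induction j generalizing x with
  | zero => simp
  | succ j ih =>
    rw [pow_succ', Perm.mul_apply, ih, subrotation_apply, cycleOf_self_apply_pow,
      ← Perm.mul_apply, ← pow_add, add_one_mul, add_comm]

theorem cycleType_subrotation {σ : Perm α} {p : ℕ} (hp : p.Prime) (hfix : ∀ x, σ x ≠ x)
    (hdvd : ∀ l ∈ σ.cycleType, p ∣ l) :
    (subrotation σ p).cycleType = Multiset.replicate (Fintype.card α / p) p := by
  have hlen : ∀ x, #(σ.cycleOf x).support ∈ σ.cycleType := fun x =>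
    mem_cycleType_iff_card_support_cycleOf.mpr ⟨x, hfix x, rfl⟩
  apply cycleType_eq_replicate_of_pow_prime_eq_one hp
  · ext x
    rw [subrotation_pow_apply, Nat.mul_div_cancel' (hdvd _ (hlen x)),
      ← pow_mod_card_support_cycleOf_self_apply, Nat.mod_self, pow_zero]
  · intro x h
    have hx : x ∈ (σ.cycleOf x).support :=
      mem_support_cycleOf_iff.mpr ⟨SameCycle.refl _ _, mem_support.mpr (hfix x)⟩
    have hpos := zero_lt_two.trans_le (two_le_of_mem_cycleType (hlen x))
    have hl := Nat.le_of_dvd hpos (hdvd _ (hlen x))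
    have hdvd' := ((σ.isCycleOn_support_cycleOf x).pow_apply_eq hx).mp h
    exact (Nat.div_lt_self hpos hp.one_lt).not_ge
      (Nat.le_of_dvd (Nat.div_pos hl hp.pos) hdvd')

theorem stabilizerOfCard_ne_top {k : ℕ} (h0 : 0 < k) (hk : k < Fintype.card α) :
    stabilizerOfCard α k ≠ ⊤ := by
  obtain ⟨s, -, hs⟩ := exists_subset_card_eq (s := (univ : Finset α)) (n := k)
    (by rw [card_univ]; exact hk.le)
  set t := Classical.epsilon fun s : Finset α => #s = k
  have ht : #t = k := Classical.epsilon_spec (p := fun s : Finset α => #s = k) ⟨s, hs⟩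
  rw [stabilizerOfCard, ← stabilizer_coe_finset]
  refine stabilizer_ne_top_of_nonempty_of_nonempty_compl
    (coe_nonempty.mpr (card_pos.mp (ht ▸ h0 : 0 < #t))) ?_
  rw [Set.nonempty_compl, Ne, coe_eq_univ, ← card_eq_iff_eq_univ]
  exact fun h => hk.ne (ht.symm.trans h)

theorem centralizer_singleton_ne_top {c : Perm α} (hc : c ≠ 1) (h3 : 3 ≤ Fintype.card α) :
    Subgroup.centralizer {c} ≠ ⊤ := by
  obtain ⟨a, ha⟩ : ∃ a, c a ≠ a := by
    by_contra! h
    exact hc (Perm.ext h)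
  obtain ⟨d, -, hd⟩ := exists_mem_notMem_of_card_lt_card (s := {a, c a}) (t := univ)
    ((card_le_two).trans_lt (by rw [card_univ]; omega))
  rw [mem_insert, mem_singleton, not_or] at hd
  intro htop
  have h := congrArg (· a) (Subgroup.mem_centralizer_singleton_iff.mp
    (htop ▸ Subgroup.mem_top (swap (c a) d)))
  simp only [Perm.mul_apply, swap_apply_left, swap_apply_of_ne_of_ne ha.symm (Ne.symm hd.1)] at h
  exact hd.2 h

variable (α) in
noncomputable def uniformCyclePerm (p : ℕ) : Perm α :=
  Classical.epsilon fun c : Perm α => c.cycleType = Multiset.replicate (Fintype.card α / p) p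

theorem cycleType_uniformCyclePerm {p : ℕ} (hp : 2 ≤ p) :
    (uniformCyclePerm α p).cycleType = Multiset.replicate (Fintype.card α / p) p :=
  Classical.epsilon_spec <| (exists_with_cycleType_iff α).mpr
    ⟨by simpa using Nat.div_mul_le_self _ p, fun a ha => Multiset.eq_of_mem_replicate ha ▸ hp⟩

variable (α) in
noncomputable def uniformCycleCentralizer (p : ℕ) : Subgroup (Perm α) :=
  Subgroup.centralizer {uniformCyclePerm α p}

theorem uniformCycleCentralizer_ne_top {p : ℕ} (hp : 2 ≤ p) (hpα : p ≤ Fintype.card α)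
    (h3 : 3 ≤ Fintype.card α) : uniformCycleCentralizer α p ≠ ⊤ := by
  refine centralizer_singleton_ne_top (fun h => ?_) h3
  have := cycleType_uniformCyclePerm (α := α) hp
  rw [h, cycleType_one] at this
  have h1 := congrArg Multiset.card this
  rw [Multiset.card_zero, Multiset.card_replicate, eq_comm, Nat.div_eq_zero_iff] at h1
  omega

theorem exists_forall_conj_mem_uniformCycleCentralizer {t : Perm α} {p : ℕ} (hp : 2 ≤ p)
    (ht : t.cycleType = Multiset.replicate (Fintype.card α / p) p) :
    ∃ g, ∀ x ∈ Subgroup.centralizer {t}, g * x * g⁻¹ ∈ uniformCycleCentralizer α p :=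
  (isConj_iff_cycleType_eq.mpr (ht.trans (cycleType_uniformCyclePerm hp).symm)
    ).exists_forall_conj_mem_centralizer

theorem exists_conj_mem_uniformCycleCentralizer {σ : Perm α} {p : ℕ} (hp : p.Prime)
    (hfix : ∀ x, σ x ≠ x) (hdvd : ∀ l ∈ σ.cycleType, p ∣ l) :
    ∃ g, g * σ * g⁻¹ ∈ uniformCycleCentralizer α p := by
  obtain ⟨g, hg⟩ := exists_forall_conj_mem_uniformCycleCentralizer hp.two_le
    (cycleType_subrotation hp hfix hdvd)
  exact ⟨g, hg σ (Subgroup.mem_centralizer_singleton_iff.mpr (commute_subrotation σ p).eq)⟩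

theorem exists_forall_conj_mem_uniformCycleCentralizer_two_of_card_eq_four {a b : α}
    (h4 : Fintype.card α = 4) (hab : a ≠ b) :
    ∃ g, ∀ x ∈ stabilizer (Perm α) ({a, b} : Finset α),
      g * x * g⁻¹ ∈ uniformCycleCentralizer α 2 := by
  obtain ⟨c, d, hcd, hcompl⟩ := card_eq_two.mp
    (show #({a, b} : Finset α)ᶜ = 2 by rw [card_compl, card_pair hab, h4])
  have hc : c ∉ ({a, b} : Finset α) := by
    rw [← mem_compl, hcompl]
    exact mem_insert_self _ _
  have hd : d ∉ ({a, b} : Finset α) := by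
    rw [← mem_compl, hcompl]
    exact mem_insert_of_mem (mem_singleton_self _)
  have hnodup : [a, b, c, d].Nodup := by
    simp only [mem_insert, mem_singleton, not_or] at hc hd
    simp [hab, hcd, Ne.symm hc.1, Ne.symm hc.2, Ne.symm hd.1, Ne.symm hd.2]
  obtain ⟨g, hg⟩ := exists_forall_conj_mem_uniformCycleCentralizer (t := swap a b * swap c d)
    le_rfl (by rw [cycleType_swap_mul_swap_of_nodup hnodup, h4]; rfl)
  refine ⟨g, fun x hx => hg x ?_⟩
  -- `x` preserves `{a, b}`, hence also its complement `{c, d}`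
  have hxab := (centralizer_swap_eq_stabilizer hab).ge hx
  have hxcd : x ∈ Subgroup.centralizer {swap c d} := by
    rw [centralizer_swap_eq_stabilizer hcd, ← hcompl, mem_stabilizer_finset]
    simpa only [mem_compl, not_iff_not] using mem_stabilizer_finset.mp hx
  rw [Subgroup.mem_centralizer_singleton_iff] at hxab hxcd ⊢
  rw [← mul_assoc, hxab, mul_assoc, hxcd, mul_assoc]

end Equiv.Perm

open Equiv.Perm

def coprimeSizes (n b : ℕ) : Finset ℕ :=
  (range n).filter fun k => k.Coprime n ∧ 2 * k < n ∧ n < b * k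

def coveringSizes (n b : ℕ) : Finset ℕ :=
  Icc 1 (n / b) ∪ coprimeSizes n b

theorem mem_coprimeSizes_or_exists_prime_dvd {n b a c : ℕ} (hb : 0 < b) (ha : 2 ≤ a)
    (hac : a ≤ c) (hn : a + c = n) (hba : n / b < a) :
    a ∈ coprimeSizes n b ∨ ∃ p, p.Prime ∧ p ∣ n ∧ p ∣ a ∧ p ∣ c := by
  by_cases hco : a.Coprime n
  · left
    have hne : a ≠ c := by
      rintro rfl
      have := hco.eq_one_of_dvd ⟨2, by omega⟩
      omega
    have hlt := (Nat.div_lt_iff_lt_mul hb).mp hba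
    simp only [coprimeSizes, mem_filter, mem_range]
    exact ⟨by omega, hco, by omega, by rwa [mul_comm]⟩
  · right
    obtain ⟨p, hp, hpa, hpn⟩ := Nat.Prime.not_coprime_iff_dvd.mp hco
    exact ⟨p, hp, hpn, hpa, (Nat.dvd_add_right hpa).mp (hn ▸ hpn)⟩

theorem pos_and_two_mul_le_of_mem_coveringSizes {n b k : ℕ} (hb : 2 ≤ b)
    (hk : k ∈ coveringSizes n b) : 0 < k ∧ 2 * k ≤ n := by
  simp only [coveringSizes, coprimeSizes, mem_union, mem_Icc, mem_filter] at hk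
  rcases hk with ⟨hk0, hkn⟩ | ⟨-, -, h2k, hnk⟩
  · have := (Nat.le_div_iff_mul_le two_pos).mp (hkn.trans (Nat.div_le_div_left hb two_pos))
    exact ⟨hk0, by omega⟩
  · exact ⟨Nat.pos_of_ne_zero fun h => by simp [h] at hnk, h2k.le⟩

theorem two_mem_coveringSizes {n b : ℕ} (hn : 5 ≤ n) (hb : b = 3 ∨ b = 4 ∧ Odd n) :
    2 ∈ coveringSizes n b := by
  have hb0 : 0 < b := by omega
  by_cases h : 2 * b ≤ n
  · exact mem_union_left _
      (mem_Icc.mpr ⟨one_le_two, (Nat.le_div_iff_mul_le hb0).mpr (by omega)⟩)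
  · refine mem_union_right _ (mem_filter.mpr
      ⟨mem_range.mpr (by omega), Nat.coprime_two_left.mpr ?_, by omega, by omega⟩)
    rcases hb with rfl | ⟨-, hodd⟩
    · exact ⟨2, by omega⟩
    · exact hodd

theorem Multiset.card_lt_of_forall_div_lt {m : Multiset ℕ} {n b : ℕ} (hb : 0 < b)
    (hsum : m.sum = n) (h : ∀ l ∈ m, n / b < l) : Multiset.card m < b := by
  have hle := Multiset.card_nsmul_le_sum (a := n / b + 1) h
  rw [smul_eq_mul, hsum] at hle
  by_contra! hbm
  have := Nat.lt_mul_div_succ n hb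
  nlinarith

theorem phiI_eq_card_coprimeSizes (n b : ℕ) (hb : 0 < b) :
    phiI ((n : ℚ) / b) ((n : ℚ) / 2) n = #(coprimeSizes n b) := by
  have hset : {i : ℕ | 0 < i ∧ (n : ℚ) / b < i ∧ (i : ℚ) < n / 2 ∧ i.Coprime n} =
      ↑(coprimeSizes n b) := by
    ext i
    have h1 : (n : ℚ) / b < i ↔ n < b * i := by
      rw [div_lt_iff₀ (by exact_mod_cast hb), mul_comm]
      exact_mod_cast Iff.rfl
    have h2 : (i : ℚ) < n / 2 ↔ 2 * i < n := by
      rw [lt_div_iff₀ two_pos, mul_comm]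
      exact_mod_cast Iff.rfl
    simp only [Set.mem_ofPred_eq, coprimeSizes, coe_filter, mem_range, h1, h2]
    constructor
    · rintro ⟨-, hbi, h2i, hco⟩
      exact ⟨by omega, hco, h2i, hbi⟩
    · rintro ⟨-, hco, h2i, hbi⟩
      exact ⟨Nat.pos_of_ne_zero fun h => by simp [h] at hbi, hbi, h2i, hco⟩
  rw [phiI, hset, Nat.card_coe_set_eq, Set.ncard_coe_finset]

section CoveringFamily

open Classical

variable {α : Type*} [Fintype α] [DecidableEq α] {b : ℕ}

variable (α) in
noncomputable def coveringFamily (b : ℕ) : Finset (Subgroup (Perm α)) :=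
  (coveringSizes (Fintype.card α) b).image (stabilizerOfCard α) ∪
    (Fintype.card α).primeFactors.image (uniformCycleCentralizer α) ∪
    if b = 4 then {alternatingGroup α} else ∅

theorem stabilizerOfCard_mem_coveringFamily {k : ℕ}
    (hk : k ∈ coveringSizes (Fintype.card α) b) :
    stabilizerOfCard α k ∈ coveringFamily α b :=
  mem_union_left _ (mem_union_left _ (mem_image_of_mem _ hk))

theorem uniformCycleCentralizer_mem_coveringFamily {p : ℕ}
    (hp : p ∈ (Fintype.card α).primeFactors) :
    uniformCycleCentralizer α p ∈ coveringFamily α b :=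
  mem_union_left _ (mem_union_right _ (mem_image_of_mem _ hp))

theorem alternatingGroup_mem_coveringFamily : alternatingGroup α ∈ coveringFamily α 4 :=
  mem_union_right _ (by simp)

theorem ne_top_of_mem_coveringFamily (hb : 2 ≤ b) (h3 : 3 ≤ Fintype.card α) :
    ∀ H ∈ coveringFamily α b, H ≠ ⊤ := by
  intro H hH
  simp only [coveringFamily, mem_union, mem_image] at hH
  rcases hH with (⟨k, hk, rfl⟩ | ⟨p, hp, rfl⟩) | hA
  · obtain ⟨hk0, hkn⟩ := pos_and_two_mul_le_of_mem_coveringSizes hb hk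
    exact stabilizerOfCard_ne_top hk0 (by omega)
  · obtain ⟨hp, hpn, -⟩ := Nat.mem_primeFactors.mp hp
    exact uniformCycleCentralizer_ne_top hp.two_le (Nat.le_of_dvd (by omega) hpn) h3
  · split_ifs at hA
    · rw [mem_singleton.mp hA]
      have := Fintype.one_lt_card_iff_nontrivial.mp (by omega : 1 < Fintype.card α)
      intro htop
      simpa [htop] using alternatingGroup.index_eq_two (α := α)
    · simp at hA

theorem exists_conj_mem_coveringFamily_of_mem_stabilizer {σ : Perm α} {s : Finset α}
    (hσ : σ ∈ stabilizer (Perm α) s) (hs : #s ∈ coveringSizes (Fintype.card α) b) :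
    ∃ H ∈ coveringFamily α b, ∃ g, g * σ * g⁻¹ ∈ H := by
  obtain ⟨g, hg⟩ := exists_forall_conj_mem_stabilizerOfCard s
  exact ⟨_, stabilizerOfCard_mem_coveringFamily hs, g, hg σ hσ⟩

theorem exists_conj_mem_coveringFamily_of_dvd_cycleType {σ : Perm α} {p : ℕ}
    (hp : p ∈ (Fintype.card α).primeFactors) (hfix : ∀ x, σ x ≠ x)
    (hdvd : ∀ l ∈ σ.cycleType, p ∣ l) :
    ∃ H ∈ coveringFamily α b, ∃ g, g * σ * g⁻¹ ∈ H := by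
  obtain ⟨g, hg⟩ := exists_conj_mem_uniformCycleCentralizer (Nat.prime_of_mem_primeFactors hp)
    hfix hdvd
  exact ⟨_, uniformCycleCentralizer_mem_coveringFamily hp, g, hg⟩

theorem exists_conj_mem_coveringFamily_of_forall_div_lt {σ : Perm α}
    (hb : b = 3 ∨ b = 4 ∧ Odd (Fintype.card α)) (hbn : b ≤ Fintype.card α)
    (hfix : ∀ x, σ x ≠ x) (hlarge : ∀ l ∈ σ.cycleType, Fintype.card α / b < l) :
    ∃ H ∈ coveringFamily α b, ∃ g, g * σ * g⁻¹ ∈ H := by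
  set n := Fintype.card α
  have hsum := sum_cycleType_of_forall_apply_ne hfix
  have hlt := Multiset.card_lt_of_forall_div_lt (by omega) hsum hlarge
  obtain ⟨x⟩ : Nonempty α := Fintype.card_pos_iff.mp (by omega)
  have hne : σ.cycleType ≠ 0 := by
    rw [Ne, cycleType_eq_zero]
    rintro rfl
    exact hfix x rfl
  have hpos := Multiset.card_pos.mpr hne
  obtain h1 | h2 | h3 : Multiset.card σ.cycleType = 1 ∨ Multiset.card σ.cycleType = 2 ∨
      Multiset.card σ.cycleType = 3 := by omega
  · obtain ⟨l, hl⟩ := Multiset.card_eq_one.mp h1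
    rw [hl, Multiset.sum_singleton] at hsum
    refine exists_conj_mem_coveringFamily_of_dvd_cycleType (Nat.mem_primeFactors.mpr
      ⟨Nat.minFac_prime (by omega), Nat.minFac_dvd n, by omega⟩) hfix ?_
    simp only [hl, Multiset.mem_singleton, forall_eq, hsum]
    exact Nat.minFac_dvd _
  · obtain ⟨a, c, hac⟩ := Multiset.card_eq_two.mp h2
    wlog hle : a ≤ c generalizing a c
    · exact this c a (hac.trans (Multiset.pair_comm a c)) (le_of_not_ge hle)
    have ha : a ∈ σ.cycleType := by simp [hac]
    rw [hac, Multiset.insert_eq_cons, Multiset.sum_cons, Multiset.sum_singleton] at hsum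
    rcases mem_coprimeSizes_or_exists_prime_dvd (by omega) (two_le_of_mem_cycleType ha) hle
      hsum (hlarge a ha) with hmem | ⟨p, hp, hpn, hpa, hpc⟩
    · obtain ⟨s, hs, hσs⟩ := exists_mem_stabilizer_card_eq_of_mem_cycleType ha
      exact exists_conj_mem_coveringFamily_of_mem_stabilizer hσs (hs ▸ mem_union_right _ hmem)
    · refine exists_conj_mem_coveringFamily_of_dvd_cycleType
        (Nat.mem_primeFactors.mpr ⟨hp, hpn, by omega⟩) hfix ?_
      simp [hac, hpa, hpc]
  · -- three cycles on an odd number of points make an even permutation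
    rcases hb with rfl | ⟨rfl, hodd⟩
    · omega
    have hsign : sign σ = 1 := by
      rw [sign_of_cycleType, hsum, h3, (hodd.add_odd (by decide : Odd 3)).neg_one_pow]
    exact ⟨_, alternatingGroup_mem_coveringFamily, 1, by simpa using hsign⟩

theorem exists_conj_mem_coveringFamily (hb : b = 3 ∨ b = 4 ∧ Odd (Fintype.card α))
    (hbn : b ≤ Fintype.card α) (σ : Perm α) :
    ∃ H ∈ coveringFamily α b, ∃ g, g * σ * g⁻¹ ∈ H := by
  have hb0 : 0 < b := by omega
  by_cases hfix : ∃ x, σ x = x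
  · obtain ⟨x, hx⟩ := hfix
    refine exists_conj_mem_coveringFamily_of_mem_stabilizer (s := {x}) ?_
      (mem_union_left _ (mem_Icc.mpr ⟨le_rfl, (Nat.one_le_div_iff hb0).mpr hbn⟩))
    rw [stabilizer_finset_singleton, mem_stabilizer_iff, Perm.smul_def, hx]
  by_cases hsmall : ∃ l ∈ σ.cycleType, l ≤ Fintype.card α / b
  · obtain ⟨l, hl, hle⟩ := hsmall
    obtain ⟨s, rfl, hσs⟩ := exists_mem_stabilizer_card_eq_of_mem_cycleType hl
    exact exists_conj_mem_coveringFamily_of_mem_stabilizer hσs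
      (mem_union_left _ (mem_Icc.mpr ⟨(one_lt_of_mem_cycleType hl).le, hle⟩))
  push Not at hfix hsmall
  exact exists_conj_mem_coveringFamily_of_forall_div_lt hb hbn hfix hsmall

theorem isBasicSet_coveringFamily (hb : b = 3 ∨ b = 4 ∧ Odd (Fintype.card α))
    (hbn : b ≤ Fintype.card α) : IsBasicSet (coveringFamily α b) :=
  ⟨ne_top_of_mem_coveringFamily (by omega) (by omega), exists_conj_mem_coveringFamily hb hbn⟩

theorem card_coveringFamily_le :
    #(coveringFamily α b) ≤ Fintype.card α / b + #(coprimeSizes (Fintype.card α) b) +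
      nuFun (Fintype.card α) + if b = 4 then 1 else 0 := by
  unfold coveringFamily
  set n := Fintype.card α
  have hsizes :
      #((coveringSizes n b).image (stabilizerOfCard α)) ≤ n / b + #(coprimeSizes n b) :=
    card_image_le.trans ((card_union_le _ _).trans (by simp))
  have hprimes : #(n.primeFactors.image (uniformCycleCentralizer α)) ≤ nuFun n := card_image_le
  have halt : #(if b = 4 then {alternatingGroup α} else (∅ : Finset (Subgroup (Perm α)))) =
      if b = 4 then 1 else 0 := by
    split_ifs <;> rfl
  have := card_union_le ((coveringSizes n b).image (stabilizerOfCard α))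
    (n.primeFactors.image (uniformCycleCentralizer α))
  refine (card_union_le _ _).trans ?_
  rw [halt]
  omega

end CoveringFamily

theorem isSpecialBasicSet_coveringFamily {n b : ℕ} (hn : 4 ≤ n)
    (hb : b = 3 ∨ b = 4 ∧ Odd n) :
    IsSpecialBasicSet (coveringFamily (Fin n) b) := by
  have hbasic : IsBasicSet (coveringFamily (Fin n) b) :=
    isBasicSet_coveringFamily (by simpa using hb) (by simp; omega)
  refine ⟨hbasic, fun M hM => ?_⟩
  rcases hM with hcyc | ⟨σ, _, ⟨a, c, hac, rfl⟩, -, hσ, -, rfl⟩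
  · exact exists_forall_conj_mem_of_isCyclic hbasic.2 hcyc
  have hM : Subgroup.closure {σ, swap a c} ≤
      stabilizer (Perm (Fin n)) ({a, c} : Finset (Fin n)) := by
    rw [← centralizer_swap_eq_stabilizer hac, Subgroup.closure_le]
    rintro x (rfl | rfl) <;> rw [SetLike.mem_coe, Subgroup.mem_centralizer_singleton_iff]
    exact hσ.eq
  obtain rfl | h5 : n = 4 ∨ 5 ≤ n := by omega
  · obtain ⟨g, hg⟩ :=
      exists_forall_conj_mem_uniformCycleCentralizer_two_of_card_eq_four (Fintype.card_fin 4) hac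
    exact ⟨_, uniformCycleCentralizer_mem_coveringFamily (p := 2) (by simp; decide), g,
      fun x hx => hg x (hM hx)⟩
  · obtain ⟨g, hg⟩ := exists_forall_conj_mem_stabilizerOfCard ({a, c} : Finset (Fin n))
    rw [card_pair hac] at hg
    exact ⟨_, stabilizerOfCard_mem_coveringFamily (by simpa using two_mem_coveringSizes h5 hb),
      g, fun x hx => hg x (hM hx)⟩

/-- For every `n ≥ 4`, `γ'(Sₙ) ≤ h(n)`. -/
theorem gamma'_le_h (n : ℕ) (hn : 4 ≤ n) : specialNormalCoveringNumber n ≤ hFun n := by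
  set b := if Even n then 3 else 4 with hb
  have hb' : b = 3 ∨ b = 4 ∧ Odd n := by
    by_cases he : Even n
    · simp [hb, he]
    · simp [hb, he, Nat.not_even_iff_odd.mp he]
  calc specialNormalCoveringNumber n ≤ #(coveringFamily (Fin n) b) :=
        Nat.sInf_le ⟨_, isSpecialBasicSet_coveringFamily hn hb', rfl⟩
    _ ≤ n / b + #(coprimeSizes n b) + nuFun n + if b = 4 then 1 else 0 := by
        simpa using card_coveringFamily_le (α := Fin n) (b := b)
    _ = hFun n := by
        rw [hFun, ← phiI_eq_card_coprimeSizes n b (by omega)]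
        by_cases he : Even n <;> simp [hb, he] <;> ring
end

section
/- For every even integer n ≥ 6, g(n) < h(n). -/
/-!
For even `n` we have `p₁ = 2`, and every branch of `g` is then at most `⌊n/4⌋ + ν(n)`, whereas
`h(n) ≥ ⌊n/3⌋ + ν(n)`. The two floors differ for every `n ≥ 6` except `n = 8`, where the integer
`3 ∈ (8/3, 4)`, coprime to `8`, supplies the missing unit.
-/

lemma one_le_nuFun {n : ℕ} (hn : 2 ≤ n) : 1 ≤ nuFun n :=
  Finset.card_pos.mpr (Nat.nonempty_primeFactors.mpr hn)

lemma pOne_eq_two_of_even {n : ℕ} (he : Even n) : pOne n = 2 :=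
  (Nat.minFac_eq_two_iff n).mpr he.two_dvd

lemma gFun_le {n : ℕ} (hn : 2 ≤ n) :
    gFun n ≤ n * (pOne n - 1) / (2 * pOne n) + nuFun n := by
  have hq : 0 < pTwo n := Nat.minFac_pos _
  have two_factors_le :
      n * ((pOne n - 1) * (pTwo n - 1)) / (2 * pOne n * pTwo n) ≤ n * (pOne n - 1) / (2 * pOne n) :=
    calc n * ((pOne n - 1) * (pTwo n - 1)) / (2 * pOne n * pTwo n)
        ≤ n * (pOne n - 1) * pTwo n / (2 * pOne n * pTwo n) := by
          rw [← mul_assoc]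
          exact Nat.div_le_div_right (Nat.mul_le_mul_left _ (Nat.sub_le _ _))
      _ = n * (pOne n - 1) / (2 * pOne n) := Nat.mul_div_mul_right _ _ hq
  have := one_le_nuFun hn
  unfold gFun
  split_ifs <;> omega

lemma phiI_pos {a b : ℚ} {n i : ℕ} (hi : 0 < i) (hai : a < i) (hib : (i : ℚ) < b)
    (hcop : i.Coprime n) : 0 < phiI a b n := by
  refine Nat.card_pos_iff.mpr ⟨⟨i, hi, hai, hib, hcop⟩, ?_⟩
  refine ((Set.finite_Iio ⌈b⌉₊).subset fun j hj => ?_).to_subtype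
  exact Nat.lt_ceil.mpr hj.2.2.1

/-- For every even `n ≥ 6`, `g(n) < h(n)`. -/
theorem g_lt_h_of_even (n : ℕ) (hn : 6 ≤ n) (he : Even n) : gFun n < hFun n := by
  have hg : gFun n ≤ n / 4 + nuFun n := by
    simpa [pOne_eq_two_of_even he] using gFun_le (n := n) (by omega)
  have hh : hFun n = n / 3 + nuFun n + phiI ((n : ℚ) / 3) ((n : ℚ) / 2) n := if_pos he
  rcases eq_or_ne n 8 with rfl | _
  · have : 0 < phiI ((8 : ℕ) / 3 : ℚ) ((8 : ℕ) / 2 : ℚ) 8 :=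
      phiI_pos (i := 3) (by norm_num) (by norm_num) (by norm_num) (by norm_num)
    omega
  · omega
end

section
/- Let n ≥ 4 be even. Then the set δ_E = {P_x : 1 ≤ x < n/2, x even} ∪ {S_{n/2} ≀ S_2, A_n} is a special basic set for S_n of cardinality ⌈(n+4)/4⌉; in particular γ'(S_n) ≤ ⌈(n+4)/4⌉. Moreover g(n) ≤ ⌈(n+4)/4⌉, with equality if and only if n = 2^α for some integer α ≥ 2, or n = 4q for some prime q. -/
/-!
An even permutation lies in `Aₙ`. An odd one has a cycle of even length `e` and stabilises its
support. If `e < n`, that support or its complement has even size `x ≤ n/2`, so it can be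
conjugated onto `{0, …, x-1}`, which puts the permutation into `P_x`, or into `P_{n/2}`, a
subgroup of `S_{n/2} ≀ S₂`. If `e = n` the permutation is an `n`-cycle, conjugate to the rotation
`i ↦ i + 1`, which exchanges the even and the odd points. A special metacyclic group `⟨σ, τ⟩`
stabilises the two points moved by `τ`, so it falls under the first case.

For `g(n)` with `n` even: if `n = 2^α` then `g(n) = n/4 + 1`; otherwise `n = 2qs` with `q` the
least odd prime factor, and `g(n) = s(q-1)/2 + 2`, or `(q-1)/2 + 1` when `n = 2q`.
-/

open Equiv Pointwise

open scoped Classical in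
/-- The set `δ_E = {P_x : 1 ≤ x < n/2, x even} ∪ {S_{n/2} ≀ S₂, Aₙ}`. -/
noncomputable def deltaE (n : ℕ) : Finset (Subgroup (Equiv.Perm (Fin n))) :=
  ((Finset.Ico 1 (n / 2)).filter (fun x => Even x)).image (Pstab n) ∪
    {blockStab n (n / 2), alternatingGroup (Fin n)}

open MulAction

namespace Equiv.Perm

variable {α : Type*}

theorem smul_set_eq_iff {ψ : Perm α} {s t : Set α} :
    ψ • s = t ↔ ∀ a, ψ a ∈ t ↔ a ∈ s := by
  constructor
  · rintro rfl a
    exact Set.smul_mem_smul_set_iff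
  · intro h
    ext y
    rw [Set.mem_smul_set_iff_inv_smul_mem, ← h, Equiv.Perm.smul_def, Perm.inv_def,
      Equiv.apply_symm_apply]

theorem mem_stabilizer_set_iff {ψ : Perm α} {s : Set α} :
    ψ ∈ stabilizer (Perm α) s ↔ ∀ a, ψ a ∈ s ↔ a ∈ s :=
  mem_stabilizer_iff.trans smul_set_eq_iff

theorem exists_smul_set_eq_of_ncard_eq [Finite α] {s t : Set α} (h : s.ncard = t.ncard) :
    ∃ k : Perm α, k • s = t := by
  classical
  have := Fintype.ofFinite α
  have := Set.powersetCard.isPretransitive (α := α) (n := t.ncard)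
  obtain ⟨k, hk⟩ := exists_smul_eq (Perm α)
    (⟨s.toFinset, by simp [← h, Set.ncard_eq_toFinset_card']⟩ : Set.powersetCard α t.ncard)
    ⟨t.toFinset, by simp [Set.ncard_eq_toFinset_card']⟩
  refine ⟨k, ?_⟩
  have := congrArg (fun u : Set.powersetCard α t.ncard => ((u : Finset α) : Set α)) hk
  simpa [Set.powersetCard.coe_smul, Finset.coe_smul_finset] using this

theorem exists_mem_cycleFactorsFinset_even_card_support [Fintype α] [DecidableEq α]
    {σ : Perm α} (h : sign σ = -1) : ∃ c ∈ σ.cycleFactorsFinset, Even c.support.card := by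
  by_contra! hodd
  have : sign σ = 1 := by
    rw [sign_of_cycleType', Multiset.prod_eq_one]
    intro x hx
    obtain ⟨m, hm, rfl⟩ := Multiset.mem_map.1 hx
    rw [cycleType_def, Multiset.mem_map] at hm
    obtain ⟨c, hc, rfl⟩ := hm
    rw [Function.comp_apply, (Nat.not_even_iff_odd.1 (hodd c hc)).neg_one_pow, neg_neg]
  rw [this] at h
  exact absurd h (by decide)

end Equiv.Perm

theorem MulAction.conj_mem_stabilizer_smul {G β : Type*} [Group G] [MulAction G β] {ψ : G}
    {a : β} (k : G) (h : ψ ∈ stabilizer G a) : k * ψ * k⁻¹ ∈ stabilizer G (k • a) := by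
  rw [stabilizer_smul_eq_stabilizer_map_conj]
  exact ⟨ψ, h, rfl⟩

theorem Subgroup.conj_mem_of_mem_zpowers {G : Type*} [Group G] {H : Subgroup G} {g k x : G}
    (hg : k * g * k⁻¹ ∈ H) (hx : x ∈ zpowers g) : k * x * k⁻¹ ∈ H :=
  (zpowers_le (H := H.comap (MulAut.conj k).toMonoidHom)).2 hg hx

open Equiv.Perm

theorem Fin.ncard_setOf_val_lt {n x : ℕ} (hx : x ≤ n) :
    {a : Fin n | (a : ℕ) < x}.ncard = x := by
  classical
  rw [Set.ncard_eq_toFinset_card', Set.toFinset_ofPred, Fin.card_filter_val_lt, min_eq_right hx]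

theorem mem_Pstab_iff {n x : ℕ} {ψ : Perm (Fin n)} :
    ψ ∈ Pstab n x ↔ ∀ a : Fin n, (ψ a : ℕ) < x ↔ (a : ℕ) < x :=
  mem_stabilizer_set_iff

theorem swap_mem_Pstab_iff {n x : ℕ} {u v : Fin n} :
    swap u v ∈ Pstab n x ↔ ((u : ℕ) < x ↔ (v : ℕ) < x) := by
  refine ⟨fun h => by simpa using (mem_Pstab_iff.1 h u).symm, fun h => ?_⟩
  by_cases hu : (u : ℕ) < x
  · exact swap_mem_stabilizer (s := {a : Fin n | (a : ℕ) < x}) hu (h.1 hu)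
  · rw [Pstab, ← stabilizer_compl]
    exact swap_mem_stabilizer (s := {a : Fin n | (a : ℕ) < x}ᶜ) hu (mt h.2 hu)

theorem Pstab_ne_top {n x : ℕ} (hx : 0 < x) (hxn : x < n) : Pstab n x ≠ ⊤ :=
  stabilizer_ne_top_of_nonempty_of_nonempty_compl ⟨⟨0, by omega⟩, hx⟩
    ⟨⟨x, hxn⟩, lt_irrefl x⟩

theorem exists_conj_mem_Pstab {n : ℕ} (s : Set (Fin n)) :
    ∃ k : Perm (Fin n),
      ∀ ψ ∈ stabilizer (Perm (Fin n)) s, k * ψ * k⁻¹ ∈ Pstab n s.ncard := by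
  have hs : s.ncard ≤ n := by simpa using Set.ncard_le_card s
  obtain ⟨k, hk⟩ := exists_smul_set_eq_of_ncard_eq (Fin.ncard_setOf_val_lt hs).symm
  refine ⟨k, fun ψ hψ => ?_⟩
  rw [Pstab, ← hk]
  exact conj_mem_stabilizer_smul k hψ

section TwoBlocks

variable {b : ℕ}

theorem div_eq_div_iff_lt_iff_lt {v w : ℕ} (hv : v < 2 * b) (hw : w < 2 * b) :
    v / b = w / b ↔ (v < b ↔ w < b) := by
  have half : ∀ u < 2 * b, u / b = if u < b then 0 else 1 := fun u hu => by
    split_ifs with h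
    · exact Nat.div_eq_of_lt h
    · exact Nat.div_eq_of_lt_le (by omega) (by omega)
  rw [half v hv, half w hw]
  split_ifs <;> simp only [true_iff, false_iff] <;> omega

theorem mem_blockStab_two_mul_iff {ψ : Perm (Fin (2 * b))} :
    ψ ∈ blockStab (2 * b) b ↔ ∀ a c : Fin (2 * b),
      (((ψ a : ℕ) < b ↔ (ψ c : ℕ) < b) ↔ ((a : ℕ) < b ↔ (c : ℕ) < b)) := by
  refine forall₂_congr fun a c => ?_
  rw [div_eq_div_iff_lt_iff_lt (ψ a).isLt (ψ c).isLt, div_eq_div_iff_lt_iff_lt a.isLt c.isLt]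

theorem Pstab_le_blockStab : Pstab (2 * b) b ≤ blockStab (2 * b) b := fun ψ hψ =>
  mem_blockStab_two_mul_iff.2 fun a c => by rw [mem_Pstab_iff.1 hψ a, mem_Pstab_iff.1 hψ c]

theorem swap_mem_blockStab_iff (hb : 2 ≤ b) {u v : Fin (2 * b)} :
    swap u v ∈ blockStab (2 * b) b ↔ ((u : ℕ) < b ↔ (v : ℕ) < b) := by
  refine ⟨fun h => ?_, fun h => Pstab_le_blockStab (swap_mem_Pstab_iff.2 h)⟩
  obtain ⟨c, -, hc⟩ := Finset.exists_mem_notMem_of_card_lt_card (s := {u, v}) (t := Finset.univ)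
    (Finset.card_le_two.trans_lt (by rw [Finset.card_univ, Fintype.card_fin]; omega))
  simp only [Finset.mem_insert, Finset.mem_singleton, not_or] at hc
  have := mem_blockStab_two_mul_iff.1 h u c
  rw [swap_apply_left, swap_apply_of_ne_of_ne hc.1 hc.2] at this
  tauto

theorem mem_blockStab_of_smul_eq_compl {ψ : Perm (Fin (2 * b))}
    (h : ψ • {a : Fin (2 * b) | (a : ℕ) < b} = {a : Fin (2 * b) | (a : ℕ) < b}ᶜ) :
    ψ ∈ blockStab (2 * b) b := by
  have hψ := smul_set_eq_iff.1 h
  simp only [Set.mem_compl_iff, Set.mem_ofPred_eq] at hψ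
  refine mem_blockStab_two_mul_iff.2 fun a c => ?_
  have := hψ a
  have := hψ c
  tauto

theorem exists_conj_mem_blockStab_of_smul_eq_compl {ψ : Perm (Fin (2 * b))}
    {s : Set (Fin (2 * b))} (h : ψ • s = sᶜ) :
    ∃ k : Perm (Fin (2 * b)), k * ψ * k⁻¹ ∈ blockStab (2 * b) b := by
  have hs : s.ncard = b := by
    have := Set.ncard_add_ncard_compl s
    rw [← h, Set.ncard_smul_set, Nat.card_eq_fintype_card, Fintype.card_fin] at this
    omega
  obtain ⟨k, hk⟩ :=
    exists_smul_set_eq_of_ncard_eq (hs.trans (Fin.ncard_setOf_val_lt (by omega)).symm)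
  refine ⟨k, mem_blockStab_of_smul_eq_compl ?_⟩
  rw [← hk, mul_smul, mul_smul, inv_smul_smul, h, Set.smul_set_compl]

theorem finRotate_smul_setOf_even {N : ℕ} [NeZero N] (hN : Even N) :
    finRotate N • {a : Fin N | Even (a : ℕ)} = {a : Fin N | Even (a : ℕ)}ᶜ := by
  have hN2 : 1 < N := by obtain ⟨m, hm⟩ := hN; have := NeZero.ne N; omega
  rw [smul_set_eq_iff]
  intro a
  simp only [Set.mem_compl_iff, Set.mem_ofPred_eq, finRotate_apply, Fin.val_add, Fin.val_one',
    Nat.mod_eq_of_lt hN2]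
  rcases Nat.lt_or_ge (a + 1) N with h | h
  · rw [Nat.mod_eq_of_lt h, Nat.even_add_one, not_not]
  · rw [show (a : ℕ) + 1 = N by omega, Nat.mod_self]
    have := a.isLt
    simp only [Nat.even_iff, Nat.zero_mod, not_true_eq_false, false_iff] at hN ⊢
    omega

theorem exists_conj_mem_blockStab_of_isCycle {σ : Perm (Fin (2 * b))} (hσ : σ.IsCycle)
    (hsupp : σ.support.card = 2 * b) :
    ∃ k : Perm (Fin (2 * b)), k * σ * k⁻¹ ∈ blockStab (2 * b) b := by
  have hb : 2 ≤ 2 * b := hsupp ▸ hσ.two_le_card_support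
  have : NeZero (2 * b) := .of_pos (by omega)
  have hrot := isCycle_finRotate_of_le (n := 2 * b) (by omega)
  obtain ⟨c, hc⟩ := isConj_iff.1 (hrot.isConj hσ
    (by rw [support_finRotate_of_le (by omega), hsupp, Finset.card_univ, Fintype.card_fin]))
  apply exists_conj_mem_blockStab_of_smul_eq_compl (s := c • {a : Fin (2 * b) | Even (a : ℕ)})
  rw [← hc, mul_smul, mul_smul, inv_smul_smul, finRotate_smul_setOf_even (even_two_mul b),
    Set.smul_set_compl]

end TwoBlocks

section DeltaE

variable {b : ℕ}

theorem Pstab_mem_deltaE {x : ℕ} (hx : 0 < x) (hxb : x < b) (heven : Even x) :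
    Pstab (2 * b) x ∈ deltaE (2 * b) := by
  classical
  simp only [deltaE, Finset.mem_union, Finset.mem_image, Finset.mem_filter, Finset.mem_Ico]
  exact Or.inl ⟨x, ⟨⟨hx, by omega⟩, heven⟩, rfl⟩

theorem blockStab_mem_deltaE : blockStab (2 * b) b ∈ deltaE (2 * b) := by
  classical
  simp [deltaE]

theorem alternatingGroup_mem_deltaE : alternatingGroup (Fin (2 * b)) ∈ deltaE (2 * b) := by
  classical
  simp [deltaE]

theorem swap_notMem_alternatingGroup {α : Type*} [Fintype α] [DecidableEq α] {u v : α}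
    (huv : u ≠ v) : swap u v ∉ alternatingGroup α := by
  rw [mem_alternatingGroup, sign_swap huv]
  decide

theorem ne_top_of_mem_deltaE (hb : 2 ≤ b) {H : Subgroup (Perm (Fin (2 * b)))}
    (hH : H ∈ deltaE (2 * b)) : H ≠ ⊤ := by
  classical
  simp only [deltaE, Finset.mem_union, Finset.mem_image, Finset.mem_filter, Finset.mem_Ico,
    Finset.mem_insert, Finset.mem_singleton, Nat.mul_div_cancel_left b two_pos] at hH
  rcases hH with ⟨x, ⟨⟨hx, hxb⟩, -⟩, rfl⟩ | rfl | rfl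
  · exact Pstab_ne_top hx (by omega)
  · intro h
    have := (swap_mem_blockStab_iff hb (u := ⟨0, by omega⟩) (v := ⟨2 * b - 1, by omega⟩)).1
      (h ▸ Subgroup.mem_top _)
    simp only at this
    omega
  · intro h
    exact swap_notMem_alternatingGroup (u := (⟨0, by omega⟩ : Fin (2 * b)))
      (v := ⟨1, by omega⟩)      (by simp [Fin.ext_iff]) (h ▸ Subgroup.mem_top _)

theorem exists_conj_stabilizer_le_mem_deltaE {s : Set (Fin (2 * b))}
    (heven : Even s.ncard) (hpos : 0 < s.ncard) (hlt : s.ncard < 2 * b) :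
    ∃ H ∈ deltaE (2 * b), ∃ k : Perm (Fin (2 * b)),
      ∀ ψ ∈ stabilizer (Perm (Fin (2 * b))) s, k * ψ * k⁻¹ ∈ H := by
  wlog hle : s.ncard ≤ b generalizing s
  · have hc : sᶜ.ncard = 2 * b - s.ncard := by
      have := Set.ncard_add_ncard_compl s
      rw [Nat.card_eq_fintype_card, Fintype.card_fin] at this
      omega
    have hceven : Even sᶜ.ncard :=
      hc ▸ (Nat.even_sub (by omega)).2 (iff_of_true (even_two_mul b) heven)
    have := this (s := sᶜ) hceven (by omega) (by omega) (by omega)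
    simpa only [stabilizer_compl] using this
  obtain ⟨k, hk⟩ := exists_conj_mem_Pstab s
  rcases hle.lt_or_eq with hlt | heq
  · exact ⟨_, Pstab_mem_deltaE hpos hlt heven, k, hk⟩
  · rw [heq] at hk
    exact ⟨_, blockStab_mem_deltaE, k, fun ψ hψ => Pstab_le_blockStab (hk ψ hψ)⟩

theorem exists_conj_mem_deltaE (g : Perm (Fin (2 * b))) :
    ∃ H ∈ deltaE (2 * b), ∃ k : Perm (Fin (2 * b)), k * g * k⁻¹ ∈ H := by
  rcases Int.units_eq_one_or (sign g) with hs | hs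
  · exact ⟨_, alternatingGroup_mem_deltaE, 1, by simpa [mem_alternatingGroup] using hs⟩
  obtain ⟨c, hc, heven⟩ := exists_mem_cycleFactorsFinset_even_card_support hs
  obtain ⟨hcycle, hgc⟩ := mem_cycleFactorsFinset_iff.1 hc
  rcases (Finset.card_le_univ c.support).lt_or_eq with hlt | heq
  · rw [Fintype.card_fin] at hlt
    obtain ⟨H, hH, k, hk⟩ := exists_conj_stabilizer_le_mem_deltaE
      (s := (c.support : Set (Fin (2 * b)))) (by rwa [Set.ncard_coe_finset])
      (by have := hcycle.two_le_card_support; rw [Set.ncard_coe_finset]; omega)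
      (by rwa [Set.ncard_coe_finset])
    exact ⟨H, hH, k, hk g (mem_stabilizer_set_iff.2 (mem_cycleFactorsFinset_support hc))⟩
  · have hcg : c = g := by
      have hsupp := Finset.eq_univ_of_card _ heq
      ext a
      rw [hgc a (hsupp ▸ Finset.mem_univ a)]
    rw [Fintype.card_fin, hcg] at heq
    obtain ⟨k, hk⟩ := exists_conj_mem_blockStab_of_isCycle (hcg ▸ hcycle) heq
    exact ⟨_, blockStab_mem_deltaE, k, hk⟩

theorem exists_conj_le_mem_deltaE_of_isSpecialMetacyclic (hb : 2 ≤ b)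
    {M : Subgroup (Perm (Fin (2 * b)))} (hM : IsSpecialMetacyclic M) :
    ∃ H ∈ deltaE (2 * b), ∃ k : Perm (Fin (2 * b)), ∀ x ∈ M, k * x * k⁻¹ ∈ H := by
  obtain ⟨σ, τ, hτ, -, hστ, -, rfl⟩ := hM
  set s : Set (Fin (2 * b)) := ↑τ.support
  have hle : Subgroup.closure {σ, τ} ≤ stabilizer (Perm (Fin (2 * b))) s := by
    rw [Subgroup.closure_le, Set.insert_subset_iff, Set.singleton_subset_iff]
    exact ⟨mem_stabilizer_set_iff.2 (mem_support_iff_of_commute hστ),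
      mem_stabilizer_set_iff.2 (mem_support_iff_of_commute (Commute.refl τ))⟩
  have hcard : s.ncard = 2 := by rw [Set.ncard_coe_finset, card_support_eq_two.2 hτ]
  obtain ⟨H, hH, k, hk⟩ := exists_conj_stabilizer_le_mem_deltaE
    (by rw [hcard]; exact even_two) (by omega) (by omega)
  exact ⟨H, hH, k, fun x hx => hk x (hle hx)⟩

theorem isSpecialBasicSet_deltaE (hb : 2 ≤ b) : IsSpecialBasicSet (deltaE (2 * b)) := by
  refine ⟨⟨fun H hH => ne_top_of_mem_deltaE hb hH, exists_conj_mem_deltaE⟩, ?_⟩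
  rintro M (hM | hM)
  · obtain ⟨⟨g, _⟩, hg⟩ := hM.exists_generator
    obtain ⟨H, hH, k, hk⟩ := exists_conj_mem_deltaE g
    refine ⟨H, hH, k, fun x hx => Subgroup.conj_mem_of_mem_zpowers hk ?_⟩
    obtain ⟨n, hn⟩ := Subgroup.mem_zpowers_iff.1 (hg ⟨x, hx⟩)
    exact ⟨n, congrArg Subtype.val hn⟩
  · exact exists_conj_le_mem_deltaE_of_isSpecialMetacyclic hb hM

theorem Pstab_injOn {n : ℕ} : Set.InjOn (Pstab n) (Set.Ico 1 n) := by
  have hne_of_lt : ∀ x ∈ Set.Ico 1 n, ∀ y, x < y → Pstab n x ≠ Pstab n y := by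
    intro x ⟨hx, hxn⟩ y hxy h
    have : swap (⟨0, by omega⟩ : Fin n) ⟨x, hxn⟩ ∈ Pstab n y := by
      rw [swap_mem_Pstab_iff]; simp only; omega
    rw [← h, swap_mem_Pstab_iff] at this
    simp only at this
    omega
  intro x hx y hy h
  by_contra hne
  rcases Nat.lt_or_gt_of_ne hne with hxy | hxy
  exacts [hne_of_lt x hx y hxy h, hne_of_lt y hy x hxy h.symm]

theorem Pstab_ne_blockStab {x : ℕ} (hb : 2 ≤ b) (hxb : x < b) :
    Pstab (2 * b) x ≠ blockStab (2 * b) b := by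
  intro h
  have := swap_mem_Pstab_iff (x := x) (u := (⟨x, by omega⟩ : Fin (2 * b)))
    (v := ⟨2 * b - 1, by omega⟩)
  rw [h, swap_mem_blockStab_iff hb] at this
  simp only at this
  omega

theorem card_filter_even_Ico_one (m : ℕ) [DecidablePred (Even : ℕ → Prop)] :
    ((Finset.Ico 1 m).filter Even).card = (m - 1) / 2 := by
  rw [← Nat.Ioc_filter_dvd_card_eq_div]
  congr 1
  ext x
  simp only [Finset.mem_filter, Finset.mem_Ico, Finset.mem_Ioc, even_iff_two_dvd]
  omega

theorem card_deltaE (hb : 2 ≤ b) : (deltaE (2 * b)).card = (2 * b + 7) / 4 := by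
  classical
  have h01 : (⟨0, by omega⟩ : Fin (2 * b)) ≠ ⟨1, by omega⟩ := by simp [Fin.ext_iff]
  rw [deltaE, Nat.mul_div_cancel_left b two_pos, Finset.card_union_of_disjoint,
    Finset.card_image_of_injOn, card_filter_even_Ico_one, Finset.card_pair]
  · omega
  · intro h
    have : swap (⟨0, by omega⟩ : Fin (2 * b)) ⟨1, by omega⟩ ∈ blockStab (2 * b) b := by
      rw [swap_mem_blockStab_iff hb]; simp only; omega
    exact swap_notMem_alternatingGroup h01 (h ▸ this)
  · intro x hx y hy
    simp only [Finset.coe_filter, Finset.mem_Ico, Set.mem_ofPred_eq] at hx hy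
    exact Pstab_injOn ⟨hx.1.1, by omega⟩ ⟨hy.1.1, by omega⟩
  · rw [Finset.disjoint_left]
    simp only [Finset.mem_image, Finset.mem_filter, Finset.mem_Ico, Finset.mem_insert,
      Finset.mem_singleton, not_or]
    rintro _ ⟨x, ⟨⟨hx, hxb⟩, ⟨y, rfl⟩⟩, rfl⟩
    refine ⟨Pstab_ne_blockStab hb hxb, fun h => ?_⟩
    have : swap (⟨0, by omega⟩ : Fin (2 * b)) ⟨1, by omega⟩ ∈ Pstab (2 * b) (y + y) := by
      rw [swap_mem_Pstab_iff]; simp only; omega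
    exact swap_notMem_alternatingGroup h01 (h ▸ this)

end DeltaE

section gFun

variable {n : ℕ}

theorem pOne_of_even (he : Even n) : pOne n = 2 :=
  (Nat.minFac_eq_two_iff n).2 he.two_dvd

theorem gFun_two_pow {k : ℕ} (hk : 2 ≤ k) : gFun (2 ^ k) = 2 ^ k / 4 + 1 := by
  have hp : pOne (2 ^ k) = 2 := pOne_of_even ((Nat.even_pow' (by omega)).2 even_two)
  have hν : nuFun (2 ^ k) = 1 := by
    rw [nuFun, Nat.primeFactors_prime_pow (by omega) Nat.prime_two, Finset.card_singleton]
  rw [gFun, if_pos hν, hp, Nat.Prime.factorization_pow Nat.prime_two, Finsupp.single_eq_same,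
    if_neg (by omega)]
  norm_num

theorem eq_two_pow_or_pTwo_odd_prime (he : Even n) (hn : n ≠ 0) :
    (∃ k, n = 2 ^ k) ∨ ((pTwo n).Prime ∧ pTwo n ≠ 2 ∧ pTwo n ∣ n) := by
  have hpTwo : pTwo n = (ordCompl[2] n).minFac := by rw [pTwo, pOne_of_even he]
  by_cases hm : ordCompl[2] n = 1
  · left
    have := Nat.ordProj_mul_ordCompl_eq_self n 2
    rw [hm, mul_one] at this
    exact ⟨_, this.symm⟩
  · right
    have hodd := Nat.not_dvd_ordCompl Nat.prime_two hn
    rw [hpTwo]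
    have hdvd := Nat.minFac_dvd (ordCompl[2] n)
    exact ⟨Nat.minFac_prime hm, fun h => hodd (by rwa [h] at hdvd),
      hdvd.trans (Nat.ordCompl_dvd n 2)⟩

theorem pair_subset_primeFactors {q : ℕ} (hq : q.Prime) (h2 : 2 ∣ n) (hqn : q ∣ n)
    (hn : n ≠ 0) :
    {2, q} ⊆ n.primeFactors := by
  rw [Finset.insert_subset_iff, Finset.singleton_subset_iff]
  exact ⟨Nat.mem_primeFactors.2 ⟨Nat.prime_two, h2, hn⟩,
    Nat.mem_primeFactors.2 ⟨hq, hqn, hn⟩⟩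

theorem nuFun_eq_two_and_factorization_eq_one_iff {q : ℕ} (hq : q.Prime) (hq2 : q ≠ 2)
    (h2 : 2 ∣ n) (hqn : q ∣ n) (hn : n ≠ 0) :
    (nuFun n = 2 ∧ n.factorization 2 = 1 ∧ n.factorization q = 1) ↔ n = 2 * q := by
  have hsub := pair_subset_primeFactors hq h2 hqn hn
  have hpair : ({2, q} : Finset ℕ).card = 2 := Finset.card_pair hq2.symm
  constructor
  · rintro ⟨hν, h2f, hqf⟩
    have hpf : n.primeFactors = {2, q} :=
      (Finset.eq_of_subset_of_card_le hsub (by rw [hpair]; exact hν.le)).symm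
    conv_lhs => rw [← Nat.prod_factorization_pow_eq_self hn]
    rw [Finsupp.prod, Nat.support_factorization, hpf, Finset.prod_pair hq2.symm, h2f, hqf,
      pow_one, pow_one]
  · rintro rfl
    have hf : (2 * q).factorization = Finsupp.single 2 1 + Finsupp.single q 1 := by
      rw [Nat.factorization_mul two_ne_zero hq.ne_zero, Nat.prime_two.factorization,
        hq.factorization]
    refine ⟨?_, by simp [hf, hq2], by simp [hf, hq2.symm]⟩
    rw [nuFun, Nat.primeFactors_mul two_ne_zero hq.ne_zero, Nat.prime_two.primeFactors,
      hq.primeFactors]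
    exact hpair

theorem gFun_two_mul_prime_mul {q s : ℕ} (hq : q.Prime) (hq2 : q ≠ 2) (hqp : pTwo n = q)
    (hn : n = 2 * q * s) (hs : 0 < s) :
    gFun n = if s = 1 then q / 2 + 1 else s * (q / 2) + 2 := by
  have he : Even n := ⟨q * s, by rw [hn]; ring⟩
  have hn0 : n ≠ 0 := by subst hn; have := hq.pos; positivity
  have h2n : 2 ∣ n := he.two_dvd
  have hqn : q ∣ n := ⟨2 * s, by rw [hn]; ring⟩
  have hν : nuFun n ≠ 1 := by
    have := Finset.card_le_card (pair_subset_primeFactors hq h2n hqn hn0)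
    rw [Finset.card_pair hq2.symm] at this
    rw [nuFun]
    omega
  have hdiv : n * ((2 - 1) * (q - 1)) / (2 * 2 * q) = s * (q / 2) := by
    have hq1 : q - 1 = 2 * (q / 2) := by
      have := Nat.odd_iff.1 (hq.odd_of_ne_two hq2)
      omega
    rw [hq1, hn, show 2 * q * s * ((2 - 1) * (2 * (q / 2))) = 2 * 2 * q * (s * (q / 2)) by ring,
      Nat.mul_div_cancel_left _ (by have := hq.pos; positivity)]
  have hbranch : n = 2 * q ↔ s = 1 := by
    rw [hn, mul_eq_left₀ (by have := hq.pos; positivity)]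
  rw [gFun, if_neg hν, pOne_of_even he, hqp, hdiv]
  simp only [nuFun_eq_two_and_factorization_eq_one_iff hq hq2 h2n hqn hn0, hbranch]
  split_ifs with hs1
  · rw [hs1, one_mul]
  · rfl

theorem exists_eq_two_pow_or_four_mul_prime_iff {q s : ℕ} (hq : q.Prime) (hq2 : q ≠ 2)
    (hn : n = 2 * q * s) :
    ((∃ α : ℕ, 2 ≤ α ∧ n = 2 ^ α) ∨ (∃ p : ℕ, p.Prime ∧ n = 4 * p)) ↔
      s = 2 := by
  have hqn : q ∣ n := ⟨2 * s, by rw [hn]; ring⟩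
  have hq_not_dvd_two_pow : ∀ k, ¬ q ∣ 2 ^ k := fun k h =>
    hq2 ((Nat.prime_dvd_prime_iff_eq hq Nat.prime_two).1 (hq.dvd_of_dvd_pow h))
  constructor
  · rintro (⟨α, -, rfl⟩ | ⟨p, hp, rfl⟩)
    · exact absurd hqn (hq_not_dvd_two_pow α)
    · have hqp : q = p := (Nat.prime_dvd_prime_iff_eq hq hp).1
        ((hq.dvd_mul.1 hqn).resolve_left (hq_not_dvd_two_pow 2))
      subst hqp
      have := hq.pos
      nlinarith
  · rintro rfl
    exact Or.inr ⟨q, hq, by rw [hn]; ring⟩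

theorem gFun_le_and_eq_iff (hn : 4 ≤ n) (he : Even n) :
    gFun n ≤ (n + 7) / 4 ∧ (gFun n = (n + 7) / 4 ↔
      (∃ α : ℕ, 2 ≤ α ∧ n = 2 ^ α) ∨ (∃ q : ℕ, q.Prime ∧ n = 4 * q)) := by
  rcases eq_two_pow_or_pTwo_odd_prime he (by omega) with ⟨k, rfl⟩ | ⟨hq, hq2, hqn⟩
  · have hk : 2 ≤ k := by
      by_contra hk
      interval_cases k <;> simp at hn
    obtain ⟨m, hm⟩ := pow_dvd_pow 2 hk
    rw [gFun_two_pow hk]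
    exact ⟨by omega, iff_of_true (by omega) (Or.inl ⟨k, hk, rfl⟩)⟩
  · obtain ⟨q, hqp⟩ : ∃ q, pTwo n = q := ⟨_, rfl⟩
    rw [hqp] at hq hq2 hqn
    obtain ⟨s, hs⟩ := Nat.Coprime.mul_dvd_of_dvd_of_dvd
      ((Nat.coprime_primes Nat.prime_two hq).2 hq2.symm) he.two_dvd hqn
    have hs0 : 0 < s := by rcases Nat.eq_zero_or_pos s with rfl | h <;> omega
    have hq1 : q = 2 * (q / 2) + 1 := by
      have := Nat.odd_iff.1 (hq.odd_of_ne_two hq2)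
      omega
    have hn' : n = 4 * (s * (q / 2)) + 2 * s := by
      rw [hs]
      nth_rewrite 1 [hq1]
      ring
    rw [gFun_two_mul_prime_mul hq hq2 hqp hs hs0, exists_eq_two_pow_or_four_mul_prime_iff hq hq2 hs]
    split_ifs with hs1
    · rw [hs1, one_mul] at hn'
      omega
    · omega

end gFun

-- `(n + 7) / 4` is `⌈(n + 4) / 4⌉` in truncating division.
/-- For even `n ≥ 4`, `δ_E` is a special basic set of cardinality `⌈(n+4)/4⌉` (which is
`(n+7)/4` in integer division), so `γ'(Sₙ) ≤ ⌈(n+4)/4⌉`; moreover `g(n) ≤ ⌈(n+4)/4⌉`,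
with equality iff `n` is a power `2^α` (`α ≥ 2`) or `n = 4q` with `q` prime. -/
theorem deltaE_specialBasicSet (n : ℕ) (hn : 4 ≤ n) (he : Even n) :
    IsSpecialBasicSet (deltaE n) ∧
    (deltaE n).card = (n + 7) / 4 ∧
    specialNormalCoveringNumber n ≤ (n + 7) / 4 ∧
    gFun n ≤ (n + 7) / 4 ∧
    (gFun n = (n + 7) / 4 ↔
      (∃ α : ℕ, 2 ≤ α ∧ n = 2 ^ α) ∨ (∃ q : ℕ, q.Prime ∧ n = 4 * q)) := by
  have hg := gFun_le_and_eq_iff hn he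
  obtain ⟨b, rfl⟩ : ∃ b, n = 2 * b := ⟨n / 2, by rw [Nat.mul_div_cancel' he.two_dvd]⟩
  have hb : 2 ≤ b := by omega
  have hδ := isSpecialBasicSet_deltaE hb
  have hcard := card_deltaE hb
  exact ⟨hδ, hcard, Nat.sInf_le ⟨_, hδ, hcard⟩, hg⟩
end
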